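/- arXiv:1707.05459 — 4 statements merged into one kernel-verified Lean document; each statement's English description precedes it below -/
import Mathlib

section
/- Fix 0 < z₀ < 1/2. For t > 2, the integral (1/t²) ∫_{t^{-1/2}}^{z₀} dz / (z³ |log z|³) is bounded by a constant (depending on z₀) times 1/(t (log t)²). -/
set_option autoImplicit false
set_option maxHeartbeats 1000000

open MeasureTheory Real

private theorem my_aux1 (q lt : ℝ) (h : lt ≤ 4*q) (h0 : 0 ≤ lt) : lt^2 ≤ 16*q^2 := by
  nlinarith

private theorem my_aux2 (lt l2 : ℝ) (h2 : 0 < l2) (h : l2 < lt) : l2*lt^2 ≤ lt^3 := by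
  nlinarith

private theorem my_aux3 (q lt : ℝ) (h : lt^2 ≤ 16*q^2) : q^2*lt^2 ≤ 16*q^4 := by
  nlinarith [sq_nonneg q, mul_le_mul_of_nonneg_left h (sq_nonneg q)]

theorem log_integral_away_from_zero_bound (z₀ : ℝ) (h0 : 0 < z₀) (h1 : z₀ < 1 / 2) :
    ∃ C > 0, ∀ t : ℝ, 2 < t →
      (1 / t ^ 2) * ∫ z in Set.Ioc (t ^ (-(1 / 2 : ℝ))) z₀,
          1 / (z ^ 3 * |Real.log z| ^ 3)
        ≤ C / (t * (Real.log t) ^ 2) := by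
  have hlog2 : (0:ℝ) < Real.log 2 := Real.log_pos one_lt_two
  have hz01 : z₀ < 1 := by linarith
  have hLpos : 0 < -Real.log z₀ := by
    have := Real.log_neg h0 hz01
    linarith
  set L : ℝ := -Real.log z₀ with hL
  refine ⟨32 / Real.log 2 + 8 / L ^ 3 + 8 * z₀⁻¹ ^ 2 / L ^ 3, by positivity, ?_⟩
  intro t ht
  have ht0 : (0:ℝ) < t := by linarith
  have ht1 : (1:ℝ) < t := by linarith
  have hlt : Real.log 2 < Real.log t := Real.log_lt_log two_pos ht
  have hlt0 : 0 < Real.log t := lt_trans hlog2 hlt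
  set a := t ^ (-(1/2 : ℝ)) with ha_def
  set b := t ^ (-(1/4 : ℝ)) with hb_def
  set q := t ^ ((1/4 : ℝ)) with hq_def
  have ha0 : 0 < a := Real.rpow_pos_of_pos ht0 _
  have hb0 : 0 < b := Real.rpow_pos_of_pos ht0 _
  have hq0 : 0 < q := Real.rpow_pos_of_pos ht0 _
  have hq1 : 1 < q := Real.one_lt_rpow_iff_of_pos ht0 |>.mpr (Or.inl ⟨ht1, by norm_num⟩)
  have hab : a ≤ b := Real.rpow_le_rpow_of_exponent_le ht1.le (by norm_num)
  have hb1 : b < 1 := Real.rpow_lt_one_of_one_lt_of_neg ht1 (by norm_num)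
  have hq4 : q ^ 4 = t := by
    rw [hq_def, ← Real.rpow_natCast (t ^ ((1/4:ℝ))) 4, ← Real.rpow_mul ht0.le]
    norm_num
  have hbinv : b⁻¹ = q := by
    rw [hb_def, hq_def, ← Real.rpow_neg ht0.le, neg_neg]
  have hainv : a⁻¹ = q ^ 2 := by
    rw [ha_def, hq_def, ← Real.rpow_neg ht0.le, neg_neg,
      ← Real.rpow_natCast (t ^ ((1/4:ℝ))) 2, ← Real.rpow_mul ht0.le]
    norm_num
  have hlogq : Real.log t = 4 * Real.log q := by
    rw [hq_def, Real.log_rpow ht0]; ring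
  have hlogt_le : Real.log t ≤ 4 * q := by
    rw [hlogq]
    have := Real.log_le_sub_one_of_pos hq0
    linarith
  have hlt2 : (Real.log t) ^ 2 ≤ 16 * q ^ 2 := my_aux1 q _ hlogt_le hlt0.le
  rcases lt_or_ge z₀ a with hza | haz
  · rw [Set.Ioc_eq_empty (by exact fun h => absurd h (not_lt.mpr hza.le)),
      MeasureTheory.setIntegral_empty, mul_zero]
    positivity
  · set m := min b z₀ with hm_def
    have ham : a ≤ m := le_min hab haz
    have hmz : m ≤ z₀ := min_le_right _ _
    have hm0 : 0 < m := lt_min hb0 h0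
    -- continuity / integrability of the integrand
    have hcont : ContinuousOn (fun z : ℝ => 1 / (z ^ 3 * |Real.log z| ^ 3))
        (Set.Icc a z₀) := by
      apply ContinuousOn.div continuousOn_const
      · exact (continuousOn_id.pow 3).mul
          (((Real.continuousOn_log.mono (fun z hz =>
            Set.mem_compl_singleton_iff.mpr
              (ne_of_gt (lt_of_lt_of_le ha0 hz.1)))).abs).pow 3)
      · intro z hz
        have hz0 : 0 < z := lt_of_lt_of_le ha0 hz.1
        have hz1 : z < 1 := lt_of_le_of_lt hz.2 hz01
        have hlz : Real.log z < 0 := Real.log_neg hz0 hz1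
        have habs : 0 < |Real.log z| := abs_pos.mpr hlz.ne
        positivity
    have hsub1 : Set.uIcc a m ⊆ Set.Icc a z₀ := by
      rw [Set.uIcc_of_le ham]; exact Set.Icc_subset_Icc le_rfl hmz
    have hsub2 : Set.uIcc m z₀ ⊆ Set.Icc a z₀ := by
      rw [Set.uIcc_of_le hmz]; exact Set.Icc_subset_Icc ham le_rfl
    have hint1 : IntervalIntegrable (fun z : ℝ => 1 / (z ^ 3 * |Real.log z| ^ 3))
        volume a m := (hcont.mono hsub1).intervalIntegrable
    have hint2 : IntervalIntegrable (fun z : ℝ => 1 / (z ^ 3 * |Real.log z| ^ 3))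
        volume m z₀ := (hcont.mono hsub2).intervalIntegrable
    -- integrability and value of z ^ (-3)
    have hzpow : ∀ u v : ℝ, 0 < u → u ≤ v →
        IntervalIntegrable (fun z : ℝ => z ^ (-3:ℤ)) volume u v := by
      intro u v hu huv
      apply ContinuousOn.intervalIntegrable
      apply ContinuousOn.zpow₀ continuousOn_id
      intro x hx
      left
      rw [Set.uIcc_of_le huv] at hx
      exact (lt_of_lt_of_le hu hx.1).ne'
    have hintz : ∀ u v : ℝ, 0 < u → u ≤ v →
        ∫ z in u..v, (z:ℝ) ^ (-3:ℤ) = (u⁻¹ ^ 2 - v⁻¹ ^ 2) / 2 := by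
      intro u v hu huv
      have hv : 0 < v := lt_of_lt_of_le hu huv
      rw [integral_zpow]
      · norm_num [zpow_ofNat]
        ring
      · right
        refine ⟨by norm_num, ?_⟩
        rw [Set.uIcc_of_le huv]
        intro h
        exact absurd h.1 (not_le.mpr hu)
    -- pointwise bound
    have hpt : ∀ z k : ℝ, 0 < z → 0 < k → k ≤ -Real.log z →
        1 / (z ^ 3 * |Real.log z| ^ 3) ≤ k⁻¹ ^ 3 * z ^ (-3:ℤ) := by
      intro z k hz hk hkz
      have hlz : Real.log z < 0 := by linarith
      have habs : |Real.log z| = -Real.log z := abs_of_neg hlz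
      have h3 : k ^ 3 ≤ (-Real.log z) ^ 3 := pow_le_pow_left₀ hk.le hkz 3
      have hstep : 1 / (z ^ 3 * |Real.log z| ^ 3) ≤ 1 / (z ^ 3 * k ^ 3) := by
        rw [habs]
        apply one_div_le_one_div_of_le (by positivity)
        exact mul_le_mul_of_nonneg_left h3 (by positivity)
      refine hstep.trans_eq ?_
      rw [show ((-3:ℤ)) = -(3:ℤ) by norm_num, zpow_neg, zpow_ofNat]
      field_simp
    -- split the integral
    have hlogb : Real.log b = -(1/4) * Real.log t := by
      rw [hb_def, Real.log_rpow ht0]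
    have hsplit : (∫ z in Set.Ioc a z₀, 1 / (z ^ 3 * |Real.log z| ^ 3))
        = (∫ z in a..m, 1 / (z ^ 3 * |Real.log z| ^ 3))
          + ∫ z in m..z₀, 1 / (z ^ 3 * |Real.log z| ^ 3) := by
      rw [intervalIntegral.integral_add_adjacent_intervals hint1 hint2]
      exact (intervalIntegral.integral_of_le (ham.trans hmz)).symm
    have hmono1 : (∫ z in a..m, 1 / (z ^ 3 * |Real.log z| ^ 3))
        ≤ ∫ z in a..m, ((Real.log t / 4)⁻¹ ^ 3 * z ^ (-3:ℤ)) := by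
      apply intervalIntegral.integral_mono_on ham hint1 ((hzpow a m ha0 ham).const_mul _)
      intro z hz
      have hz0 : 0 < z := lt_of_lt_of_le ha0 hz.1
      apply hpt z _ hz0 (by positivity)
      have hzb : z ≤ b := hz.2.trans (min_le_left _ _)
      have hlb : Real.log z ≤ Real.log b := Real.log_le_log hz0 hzb
      rw [hlogb] at hlb
      linarith
    have hmono2 : (∫ z in m..z₀, 1 / (z ^ 3 * |Real.log z| ^ 3))
        ≤ ∫ z in m..z₀, (L⁻¹ ^ 3 * z ^ (-3:ℤ)) := by
      apply intervalIntegral.integral_mono_on hmz hint2 ((hzpow m z₀ hm0 hmz).const_mul _)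
      intro z hz
      have hz0 : 0 < z := lt_of_lt_of_le hm0 hz.1
      apply hpt z _ hz0 hLpos
      have hlb : Real.log z ≤ Real.log z₀ := Real.log_le_log hz0 hz.2
      rw [hL]
      linarith
    have hval1 : (∫ z in a..m, ((Real.log t / 4)⁻¹ ^ 3 * z ^ (-3:ℤ)))
        = (Real.log t / 4)⁻¹ ^ 3 * ((a⁻¹ ^ 2 - m⁻¹ ^ 2) / 2) := by
      rw [intervalIntegral.integral_const_mul, hintz a m ha0 ham]
    have hval2 : (∫ z in m..z₀, (L⁻¹ ^ 3 * z ^ (-3:ℤ)))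
        = L⁻¹ ^ 3 * ((m⁻¹ ^ 2 - z₀⁻¹ ^ 2) / 2) := by
      rw [intervalIntegral.integral_const_mul, hintz m z₀ hm0 hmz]
    -- numeric facts
    have hainv2 : a⁻¹ ^ 2 = t := by rw [hainv, ← hq4]; ring
    have hm2 : m⁻¹ ^ 2 - z₀⁻¹ ^ 2 ≤ q ^ 2 := by
      rcases le_total b z₀ with h | h
      · have hmb : m = b := min_eq_left h
        rw [hmb, hbinv]
        linarith [sq_nonneg z₀⁻¹]
      · have hmz' : m = z₀ := min_eq_right h
        rw [hmz']
        linarith [sq_nonneg q]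
    set lt := Real.log t with hlt_def
    -- bound on the first piece
    have e1 : (lt / 4)⁻¹ ^ 3 * ((a⁻¹ ^ 2 - m⁻¹ ^ 2) / 2)
        ≤ 32 / Real.log 2 * t / lt ^ 2 := by
      have hc : (lt / 4)⁻¹ ^ 3 = 64 / lt ^ 3 := by
        field_simp
        ring
      rw [hc, hainv2]
      have step : 64 / lt ^ 3 * ((t - m⁻¹ ^ 2) / 2) ≤ 64 / lt ^ 3 * (t / 2) := by
        apply mul_le_mul_of_nonneg_left _ (by positivity)
        linarith [sq_nonneg m⁻¹]
      refine step.trans ?_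
      have h1 : 64 / lt ^ 3 * (t / 2) = 32 * t / lt ^ 3 := by ring
      rw [h1]
      have h2 : 32 * t / lt ^ 3 ≤ 32 * t / (Real.log 2 * lt ^ 2) := by
        gcongr
        exact my_aux2 lt (Real.log 2) hlog2 hlt
      refine h2.trans_eq ?_
      rw [eq_div_iff (by positivity)]
      field_simp
    -- bound on the second piece
    have e2 : L⁻¹ ^ 3 * ((m⁻¹ ^ 2 - z₀⁻¹ ^ 2) / 2) ≤ 8 / L ^ 3 * t / lt ^ 2 := by
      have step : L⁻¹ ^ 3 * ((m⁻¹ ^ 2 - z₀⁻¹ ^ 2) / 2) ≤ L⁻¹ ^ 3 * (q ^ 2 / 2) := by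
        apply mul_le_mul_of_nonneg_left _ (by positivity)
        linarith
      refine step.trans ?_
      have h1 : L⁻¹ ^ 3 * (q ^ 2 / 2) = q ^ 2 / (2 * L ^ 3) := by
        field_simp
      rw [h1]
      have h2 : q ^ 2 / (2 * L ^ 3) ≤ 8 * t / (L ^ 3 * lt ^ 2) := by
        rw [div_le_div_iff₀ (by positivity) (by positivity)]
        have key : q ^ 2 * lt ^ 2 ≤ 16 * q ^ 4 := my_aux3 q lt hlt2
        calc q ^ 2 * (L ^ 3 * lt ^ 2) = (q ^ 2 * lt ^ 2) * L ^ 3 := by ring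
          _ ≤ (16 * q ^ 4) * L ^ 3 :=
              mul_le_mul_of_nonneg_right key (pow_pos hLpos 3).le
          _ = 8 * t * (2 * L ^ 3) := by rw [hq4]; ring
      refine h2.trans_eq ?_
      rw [eq_div_iff (by positivity)]
      field_simp
    have e3 : (0:ℝ) ≤ 8 * z₀⁻¹ ^ 2 / L ^ 3 * t / lt ^ 2 := by positivity
    have hI : (∫ z in Set.Ioc a z₀, 1 / (z ^ 3 * |Real.log z| ^ 3))
        ≤ (32 / Real.log 2 + 8 / L ^ 3 + 8 * z₀⁻¹ ^ 2 / L ^ 3) * t / lt ^ 2 := by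
      have hsum : (32 / Real.log 2 + 8 / L ^ 3 + 8 * z₀⁻¹ ^ 2 / L ^ 3) * t / lt ^ 2
          = 32 / Real.log 2 * t / lt ^ 2 + 8 / L ^ 3 * t / lt ^ 2
            + 8 * z₀⁻¹ ^ 2 / L ^ 3 * t / lt ^ 2 := by ring
      rw [hsplit, hsum]
      have p1 := (hmono1.trans_eq hval1).trans e1
      have p2 := (hmono2.trans_eq hval2).trans e2
      linarith
    have hfinal : (1 / t ^ 2) * (∫ z in Set.Ioc a z₀, 1 / (z ^ 3 * |Real.log z| ^ 3))
        ≤ (1 / t ^ 2) * ((32 / Real.log 2 + 8 / L ^ 3 + 8 * z₀⁻¹ ^ 2 / L ^ 3) * t / lt ^ 2) :=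
      mul_le_mul_of_nonneg_left hI (by positivity)
    refine hfinal.trans_eq ?_
    field_simp
end

section
/- Let m > 0 and let E : (0,∞) → ℂ be supported in (0, z₀) for small z₀, and suppose |∂_z^j E(z)| ≲ |log z|^{-2-j·0} in the sense that |E(z)| ≲ (log z)^{-2}, |E'(z)| ≲ z^{-1}|log z|^{-3}, and |E''(z)| ≲ z^{-2}|log z|^{-3} for 0 < z < z₀. Then for t > 2, | ∫_0^∞ e^{-it√(z²+m²)} (z χ(z)/√(z²+m²)) E(z) dz | ≲ 1/(t (log t)²), where χ is a smooth cutoff supported in [0, 2z₀] equal to 1 on [0, z₀]. -/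
set_option autoImplicit false
set_option maxHeartbeats 1000000

open MeasureTheory Real Set

namespace OscAux

noncomputable def phi (m z : ℝ) : ℝ := Real.sqrt (z ^ 2 + m ^ 2)

lemma phi_pos (m : ℝ) (hm : 0 < m) (z : ℝ) : 0 < phi m z :=
  Real.sqrt_pos.2 (by positivity)

lemma le_phi (m : ℝ) (hm : 0 ≤ m) (z : ℝ) (hz : 0 ≤ z) : z ≤ phi m z := by
  have : z = Real.sqrt (z ^ 2) := by rw [Real.sqrt_sq hz]
  rw [this, phi]
  exact Real.sqrt_le_sqrt (by nlinarith [Real.sq_sqrt (sq_nonneg z)])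

lemma m_le_phi (m : ℝ) (hm : 0 ≤ m) (z : ℝ) : m ≤ phi m z := by
  have : m = Real.sqrt (m ^ 2) := by rw [Real.sqrt_sq hm]
  nth_rewrite 1 [this]
  exact Real.sqrt_le_sqrt (by nlinarith)

lemma phi_mono (m : ℝ) (a b : ℝ) (hab : a ≤ b) (ha : 0 ≤ a) : phi m a ≤ phi m b :=
  Real.sqrt_le_sqrt (by nlinarith)

lemma hasDerivAt_phi (m : ℝ) (hm : 0 < m) (z : ℝ) :
    HasDerivAt (phi m) (z / phi m z) z := by
  have h1 : HasDerivAt (fun z : ℝ => z ^ 2 + m ^ 2) (2 * z) z := by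
    simpa using ((hasDerivAt_pow 2 z).add_const (m ^ 2))
  have h2 := h1.sqrt (by positivity)
  refine h2.congr_deriv ?_
  symm
  rw [phi]; field_simp

noncomputable def g (m t z : ℝ) : ℂ := Complex.exp (-Complex.I * t * (phi m z : ℂ))

lemma norm_g (m t z : ℝ) : ‖g m t z‖ = 1 := by
  rw [g, Complex.norm_exp]
  have : (-Complex.I * t * (phi m z : ℂ)).re = 0 := by simp
  rw [this, Real.exp_zero]

lemma hasDerivAt_g (m t : ℝ) (hm : 0 < m) (z : ℝ) :
    HasDerivAt (g m t) (-Complex.I * t * ((z / phi m z : ℝ) : ℂ) * g m t z) z := by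
  have h1 : HasDerivAt (fun z : ℝ => ((phi m z : ℝ) : ℂ)) ((z / phi m z : ℝ) : ℂ) z :=
    (hasDerivAt_phi m hm z).ofReal_comp
  have h2 : HasDerivAt (fun z : ℝ => -Complex.I * t * ((phi m z : ℝ) : ℂ))
      (-Complex.I * t * ((z / phi m z : ℝ) : ℂ)) z := h1.const_mul _
  unfold g
  have := h2.cexp
  convert this using 1
  ring

noncomputable def w (m t z : ℝ) : ℂ := (Complex.I / t) * g m t z

lemma norm_w (m t z : ℝ) : ‖w m t z‖ = 1 / |t| := by
  rw [w, norm_mul, norm_g, norm_div, Complex.norm_I]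
  simp

lemma hasDerivAt_w (m t : ℝ) (hm : 0 < m) (ht : t ≠ 0) (z : ℝ) :
    HasDerivAt (w m t) (((z / phi m z : ℝ) : ℂ) * g m t z) z := by
  have := (hasDerivAt_g m t hm z).const_mul (Complex.I / t)
  refine this.congr_deriv ?_
  symm
  have ht' : (t : ℂ) ≠ 0 := by exact_mod_cast ht
  rw [div_mul_eq_mul_div, eq_div_iff ht']
  have : Complex.I * (-Complex.I * t * ((z / phi m z : ℝ) : ℂ) * g m t z) =
      (-(Complex.I * Complex.I)) * t * ((z / phi m z : ℝ) : ℂ) * g m t z := by ring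
  rw [this, Complex.I_mul_I, neg_neg, one_mul]
  ring



lemma inv_sq_log_anti {x y : ℝ} (hx : 0 < x) (hxy : x ≤ y) (hy : y < 1) :
    (Real.log x) ^ (-2 : ℤ) ≤ (Real.log y) ^ (-2 : ℤ) := by
  have hly : Real.log y < 0 := Real.log_neg (lt_of_lt_of_le hx hxy) hy
  have hlx : Real.log x ≤ Real.log y := Real.log_le_log hx hxy
  have h1 : 0 < Real.log y ^ 2 := by nlinarith
  have h2 : Real.log y ^ 2 ≤ Real.log x ^ 2 := by nlinarith
  rw [zpow_neg, zpow_neg, zpow_two, zpow_two]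
  have := inv_anti₀ (by nlinarith) (by nlinarith : Real.log y * Real.log y ≤ Real.log x * Real.log x)
  simpa using this

lemma log_zpow_pos {y : ℝ} (hy0 : 0 < y) (hy : y < 1) : 0 < (Real.log y) ^ (-2 : ℤ) := by
  have hly : Real.log y < 0 := Real.log_neg hy0 hy
  rw [zpow_neg, zpow_two]
  exact inv_pos.2 (by nlinarith)

lemma abs_log_cube_le {x : ℝ} (hx : 0 < x) (hx2 : x < 1 / 2) :
    |Real.log x| ^ (-3 : ℤ) ≤ (Real.log 2)⁻¹ ^ 3 := by
  have hl2 : 0 < Real.log 2 := Real.log_pos (by norm_num)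
  have hlx : Real.log x < -Real.log 2 := by
    have := Real.log_lt_log hx hx2
    rw [show (1:ℝ)/2 = 2⁻¹ by norm_num, Real.log_inv] at this
    linarith
  have habs : Real.log 2 ≤ |Real.log x| := by
    rw [abs_of_neg (by linarith)]
    linarith
  rw [zpow_neg, show (3:ℤ) = ((3:ℕ):ℤ) by norm_num, zpow_natCast, ← inv_pow]
  exact pow_le_pow_left₀ (by positivity) (inv_anti₀ hl2 habs) 3

lemma log_neg_int_integral (a b : ℝ) (ha : 0 < a) (hab : a ≤ b) (hb : b < 1) :
    ∫ x in a..b, x⁻¹ * |Real.log x| ^ (-3 : ℤ)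
      = (Real.log b) ^ (-2 : ℤ) / 2 - (Real.log a) ^ (-2 : ℤ) / 2 := by
  have key : ∀ x ∈ Set.uIcc a b,
      HasDerivAt (fun y => (Real.log y) ^ (-2 : ℤ) / 2) (x⁻¹ * |Real.log x| ^ (-3 : ℤ)) x := by
    intro x hx
    rw [Set.uIcc_of_le hab] at hx
    have hx0 : 0 < x := lt_of_lt_of_le ha hx.1
    have hx1 : x < 1 := lt_of_le_of_lt hx.2 hb
    have hlx : Real.log x < 0 := Real.log_neg hx0 hx1
    have h1 : HasDerivAt Real.log x⁻¹ x := Real.hasDerivAt_log (ne_of_gt hx0)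
    have h2 : HasDerivAt (fun y => (Real.log y) ^ 2) (2 * Real.log x * x⁻¹) x := by
      simpa using h1.fun_pow 2
    have h3 := (h2.inv (pow_ne_zero 2 (ne_of_lt hlx))).div_const 2
    refine h3.congr_deriv ?_
    symm
    rw [abs_of_neg hlx]
    have hne : Real.log x ≠ 0 := ne_of_lt hlx
    rw [show (-3:ℤ) = (-((3:ℕ):ℤ)) by norm_num, zpow_neg, zpow_natCast]
    rw [neg_pow]
    field_simp [hne, hx0.ne']
  have hcont : ContinuousOn (fun x : ℝ => x⁻¹ * |Real.log x| ^ (-3 : ℤ)) (Set.uIcc a b) := by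
    rw [Set.uIcc_of_le hab]
    apply ContinuousOn.mul
    · exact continuousOn_inv₀.mono (fun x hx => ne_of_gt (lt_of_lt_of_le ha hx.1))
    · intro x hx
      have hx0 : 0 < x := lt_of_lt_of_le ha hx.1
      have hx1 : x < 1 := lt_of_le_of_lt hx.2 hb
      have hlx : Real.log x ≠ 0 := ne_of_lt (Real.log_neg hx0 hx1)
      exact ContinuousWithinAt.zpow₀
        ((Real.continuousAt_log (ne_of_gt hx0)).continuousWithinAt.abs) _
        (Or.inl (by simpa using hlx))
  rw [intervalIntegral.integral_eq_sub_of_hasDerivAt key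
    (hcont.intervalIntegrable)]

lemma deriv_zero_of_supp (E : ℝ → ℂ) (z₀ : ℝ) (hz₀ : 0 < z₀)
    (hE : ContDiffOn ℝ 2 E (Set.Ioi 0)) (hsupp : ∀ z, z₀ ≤ z → E z = 0) :
    deriv E z₀ = 0 := by
  have hd : DifferentiableAt ℝ E z₀ :=
    (hE.differentiableOn (by norm_num)).differentiableAt
      (Ioi_mem_nhds hz₀)
  have h1 : HasDerivWithinAt E (deriv E z₀) (Set.Ici z₀) z₀ :=
    hd.hasDerivAt.hasDerivWithinAt
  have h2 : HasDerivWithinAt E 0 (Set.Ici z₀) z₀ := by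
    have hconst : HasDerivWithinAt (fun _ : ℝ => (0:ℂ)) 0 (Set.Ici z₀) z₀ :=
      (hasDerivWithinAt_const z₀ _ 0)
    exact hconst.congr (fun x hx => (hsupp x hx).symm ▸ rfl) ((hsupp z₀ le_rfl).symm ▸ rfl)
  have hu : UniqueDiffWithinAt ℝ (Set.Ici z₀) z₀ := uniqueDiffOn_Ici z₀ z₀ Set.self_mem_Ici
  have e1 := h1.derivWithin hu
  have e2 := h2.derivWithin hu
  rw [← e1, ← e2]

lemma hasDerivAt_phi_div (m : ℝ) (hm : 0 < m) (x : ℝ) (hx : 0 < x) :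
    HasDerivAt (fun y => phi m y / y) (-(m ^ 2) / (phi m x * x ^ 2)) x := by
  have hφ : 0 < phi m x := phi_pos m hm x
  have h := (hasDerivAt_phi m hm x).div (hasDerivAt_id x) (ne_of_gt hx)
  refine h.congr_deriv ?_
  symm
  have hsq : phi m x ^ 2 = x ^ 2 + m ^ 2 := Real.sq_sqrt (by positivity)
  simp only [id]
  field_simp
  linear_combination hsq

lemma zpow_neg_two (a : ℝ) : a ^ (-2 : ℤ) = (a ^ 2)⁻¹ := by
  rw [show (-2:ℤ) = -((2:ℕ):ℤ) by norm_num, zpow_neg, zpow_natCast]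

lemma zpow_neg_three (a : ℝ) : a ^ (-3 : ℤ) = (a ^ 3)⁻¹ := by
  rw [show (-3:ℤ) = -((3:ℕ):ℤ) by norm_num, zpow_neg, zpow_natCast]

lemma log_int_integrable (a b : ℝ) (ha : 0 < a) (hab : a ≤ b) (hb : b < 1) :
    IntervalIntegrable (fun x => x⁻¹ * |Real.log x| ^ (-3 : ℤ)) MeasureTheory.volume a b := by
  have hcont : ContinuousOn (fun x : ℝ => x⁻¹ * |Real.log x| ^ (-3 : ℤ)) (Set.uIcc a b) := by
    rw [Set.uIcc_of_le hab]
    apply ContinuousOn.mul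
    · exact continuousOn_inv₀.mono (fun x hx => ne_of_gt (lt_of_lt_of_le ha hx.1))
    · intro x hx
      have hx0 : 0 < x := lt_of_lt_of_le ha hx.1
      have hx1 : x < 1 := lt_of_le_of_lt hx.2 hb
      have hlx : Real.log x ≠ 0 := ne_of_lt (Real.log_neg hx0 hx1)
      exact ContinuousWithinAt.zpow₀
        ((Real.continuousAt_log (ne_of_gt hx0)).continuousWithinAt.abs) _
        (Or.inl (by simpa using hlx))
  exact hcont.intervalIntegrable

end OscAux
/-- Corollary 4.2: oscillatory integrals with amplitude `Õ₂((log z)^{-2})`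
decay like `t^{-1}(log t)^{-2}`. -/
theorem osc_integral_log_decay (m z₀ : ℝ) (hm : 0 < m) (hz₀ : 0 < z₀) (hz₀1 : z₀ < 1 / 2)
    (χ : ℝ → ℝ) (hχ : ContDiff ℝ (⊤ : ℕ∞) χ)
    (hχ1 : ∀ z ∈ Icc (0 : ℝ) z₀, χ z = 1)
    (hχ0 : ∀ z, 2 * z₀ < z → χ z = 0)
    (hχrange : ∀ z, 0 ≤ χ z ∧ χ z ≤ 1)
    (E : ℝ → ℂ) (hE : ContDiffOn ℝ 2 E (Ioi 0))
    (c : ℝ)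
    (hE0 : ∀ z ∈ Ioo (0 : ℝ) z₀, ‖E z‖ ≤ c * (Real.log z) ^ (-2 : ℤ))
    (hE1 : ∀ z ∈ Ioo (0 : ℝ) z₀, ‖deriv E z‖ ≤ c * z⁻¹ * |Real.log z| ^ (-3 : ℤ))
    (hE2 : ∀ z ∈ Ioo (0 : ℝ) z₀, ‖deriv (deriv E) z‖ ≤ c * (z ^ 2)⁻¹ * |Real.log z| ^ (-3 : ℤ))
    (hsupp : ∀ z, z₀ ≤ z → E z = 0) :
    ∃ C > 0, ∀ t : ℝ, 2 < t →
      ‖∫ z in Ioi (0 : ℝ),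
          Complex.exp (-Complex.I * t * ((Real.sqrt (z ^ 2 + m ^ 2) : ℝ) : ℂ))
            * ((z * χ z / Real.sqrt (z ^ 2 + m ^ 2) : ℝ) : ℂ) * E z‖
        ≤ C / (t * (Real.log t) ^ 2) := by
  classical
  -- basic constants
  have hlog2 : 0 < Real.log 2 := Real.log_pos (by norm_num)
  set B : ℝ := (Real.log 2)⁻¹ ^ 3 with hBdef
  have hB0 : 0 < B := pow_pos (inv_pos.2 hlog2) 3
  set Φ : ℝ := Real.sqrt (z₀ ^ 2 + m ^ 2) with hΦdef
  have hΦ0 : 0 < Φ := Real.sqrt_pos.2 (by positivity)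
  -- c is nonnegative
  have hc0 : 0 ≤ c := by
    have hz : z₀ / 2 ∈ Ioo (0 : ℝ) z₀ := ⟨by linarith, by linarith⟩
    have h1 := hE0 _ hz
    have h2 : 0 < (Real.log (z₀ / 2)) ^ (-2 : ℤ) :=
      OscAux.log_zpow_pos (by linarith) (by linarith)
    nlinarith [norm_nonneg (E (z₀ / 2))]
  set M : ℝ := c * (Real.log z₀) ^ (-2 : ℤ) with hMdef
  have hM0 : 0 ≤ M := mul_nonneg hc0 (OscAux.log_zpow_pos hz₀ (by linarith)).le
  set T₀ : ℝ := z₀⁻¹ ^ 4 + 4 with hT₀def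
  have hz₀inv : 0 < z₀⁻¹ ^ 4 := by positivity
  have hT₀4 : 4 ≤ T₀ := by simp only [hT₀def]; linarith
  have hT₀0 : 0 < T₀ := by linarith
  set Clarge : ℝ := 42 * c + 16 * c * B * Φ + 8 * c * B * (Φ + m) with hCl
  have hCl0 : 0 ≤ Clarge := by
    have h1 : 0 ≤ 16 * c * B * Φ := by positivity
    have h2 : 0 ≤ 8 * c * B * (Φ + m) := by positivity
    simp only [hCl]; linarith
  set Csmall : ℝ := M * z₀ * (T₀ * (Real.log T₀) ^ 2) with hCs
  have hCs0 : 0 ≤ Csmall := by positivity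
  refine ⟨Clarge + Csmall + 1, by linarith, ?_⟩
  intro t ht
  have ht0 : 0 < t := by linarith
  have ht1 : 1 < t := by linarith
  have hL : 0 < Real.log t := Real.log_pos ht1
  have htL2 : 0 < t * Real.log t ^ 2 := by positivity
  -- the integrand
  set f : ℝ → ℂ := fun z =>
    Complex.exp (-Complex.I * t * ((Real.sqrt (z ^ 2 + m ^ 2) : ℝ) : ℂ))
      * ((z * χ z / Real.sqrt (z ^ 2 + m ^ 2) : ℝ) : ℂ) * E z with hfdef
  show ‖∫ z in Ioi (0 : ℝ), f z‖ ≤ (Clarge + Csmall + 1) / (t * Real.log t ^ 2)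
  -- continuity facts
  have hφcont : Continuous (OscAux.phi m) := by
    apply Real.continuous_sqrt.comp; continuity
  have hφpos : ∀ z : ℝ, 0 < OscAux.phi m z := OscAux.phi_pos m hm
  have hgcont : Continuous (OscAux.g m t) := by
    apply Complex.continuous_exp.comp
    exact continuous_const.mul (Complex.continuous_ofReal.comp hφcont)
  have hampcont : Continuous fun z : ℝ => ((z * χ z / OscAux.phi m z : ℝ) : ℂ) :=
    Complex.continuous_ofReal.comp
      (((continuous_id.mul hχ.continuous).div hφcont) fun z => (hφpos z).ne')
  have hfg : ∀ z : ℝ, f z = OscAux.g m t z * ((z * χ z / OscAux.phi m z : ℝ) : ℂ) * E z :=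
    fun z => rfl
  have hfcont : ContinuousOn f (Ioi 0) := by
    have : ContinuousOn (fun z => OscAux.g m t z * ((z * χ z / OscAux.phi m z : ℝ) : ℂ) * E z)
        (Ioi 0) := ((hgcont.mul hampcont).continuousOn).mul hE.continuousOn
    simpa [funext hfg] using this
  have hE'cd : ContDiffOn ℝ 1 (deriv E) (Ioi 0) :=
    hE.deriv_of_isOpen isOpen_Ioi (by norm_num)
  have hE'c : ContinuousOn (deriv E) (Ioi 0) := hE'cd.continuousOn
  have hE''c : ContinuousOn (deriv (deriv E)) (Ioi 0) :=
    hE'cd.continuousOn_deriv_of_isOpen isOpen_Ioi (le_refl 1)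
  have hEd : ∀ x : ℝ, 0 < x → HasDerivAt E (deriv E x) x := fun x hx =>
    ((hE.differentiableOn (by norm_num)).differentiableAt (Ioi_mem_nhds hx)).hasDerivAt
  have hE'd : ∀ x : ℝ, 0 < x → HasDerivAt (deriv E) (deriv (deriv E) x) x := fun x hx =>
    ((hE'cd.differentiableOn (by norm_num)).differentiableAt (Ioi_mem_nhds hx)).hasDerivAt
  have hderivz₀ : deriv E z₀ = 0 := OscAux.deriv_zero_of_supp E z₀ hz₀ hE hsupp
  -- norm bound on the integrand
  have hnorm_f : ∀ z ∈ Ioo (0 : ℝ) z₀, ‖f z‖ ≤ c * (Real.log z) ^ (-2 : ℤ) := by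
    intro z hz
    have hφz := hφpos z
    have hamp : |z * χ z / OscAux.phi m z| ≤ 1 := by
      rw [abs_of_nonneg (div_nonneg (mul_nonneg hz.1.le (hχrange z).1) hφz.le)]
      rw [div_le_one hφz]
      calc z * χ z ≤ z * 1 := by
            have := (hχrange z).2; nlinarith [hz.1.le]
        _ = z := mul_one z
        _ ≤ OscAux.phi m z := OscAux.le_phi m hm.le z hz.1.le
    calc ‖f z‖ = ‖OscAux.g m t z‖ * ‖((z * χ z / OscAux.phi m z : ℝ) : ℂ)‖ * ‖E z‖ := by
          rw [hfg, norm_mul, norm_mul]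
      _ = |z * χ z / OscAux.phi m z| * ‖E z‖ := by
          rw [OscAux.norm_g, one_mul, Complex.norm_real, Real.norm_eq_abs]
      _ ≤ 1 * ‖E z‖ := by
          exact mul_le_mul_of_nonneg_right hamp (norm_nonneg _)
      _ = ‖E z‖ := one_mul _
      _ ≤ c * (Real.log z) ^ (-2 : ℤ) := hE0 z hz
  have hnorm_fM : ∀ z ∈ Ioo (0 : ℝ) z₀, ‖f z‖ ≤ M := by
    intro z hz
    refine (hnorm_f z hz).trans ?_
    exact mul_le_mul_of_nonneg_left (OscAux.inv_sq_log_anti hz.1 hz.2.le (by linarith)) hc0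
  -- integrability
  have hfintIoo : IntegrableOn f (Ioo 0 z₀) := by
    have hmeas : AEStronglyMeasurable f (volume.restrict (Ioo 0 z₀)) :=
      (hfcont.mono fun x hx => hx.1).aestronglyMeasurable measurableSet_Ioo
    refine Integrable.mono' (g := fun _ => M)
      (integrableOn_const measure_Ioo_lt_top.ne) hmeas ?_
    exact (ae_restrict_iff' measurableSet_Ioo).2 (Filter.Eventually.of_forall hnorm_fM)
  have hfintIoc : IntegrableOn f (Ioc 0 z₀) :=
    (integrableOn_Ioc_iff_integrableOn_Ioo enorm_ne_top).2 hfintIoo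
  have hfintIcc : IntegrableOn f (Icc 0 z₀) :=
    (integrableOn_Icc_iff_integrableOn_Ioc enorm_ne_top).2 hfintIoc
  have hf0 : EqOn f (fun _ => (0 : ℂ)) (Ici z₀) := by
    intro z hz
    simp only [hfdef, hsupp z hz, mul_zero]
  -- reduce to the interval (0, z₀)
  have hIeq : (∫ z in Ioi (0 : ℝ), f z) = ∫ z in (0 : ℝ)..z₀, f z := by
    have hsplit : Ioo (0 : ℝ) z₀ ∪ Ici z₀ = Ioi 0 := Ioo_union_Ici_eq_Ioi hz₀
    have hdisj : Disjoint (Ioo (0 : ℝ) z₀) (Ici z₀) :=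
      Set.disjoint_left.2 fun x hx hx' => absurd hx.2 (not_lt.2 hx')
    have hint2 : IntegrableOn f (Ici z₀) :=
      (integrableOn_zero).congr_fun hf0.symm measurableSet_Ici
    rw [← hsplit, setIntegral_union hdisj measurableSet_Ici hfintIoo hint2]
    rw [setIntegral_congr_fun measurableSet_Ici hf0, integral_zero, add_zero]
    rw [intervalIntegral.integral_of_le hz₀.le, integral_Ioc_eq_integral_Ioo]
  -- small t case
  rcases lt_or_ge t T₀ with htT | htT
  · have hIbound : ‖∫ z in Ioi (0 : ℝ), f z‖ ≤ M * z₀ := by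
      rw [hIeq, intervalIntegral.integral_of_le hz₀.le, integral_Ioc_eq_integral_Ioo]
      calc ‖∫ z in Ioo (0:ℝ) z₀, f z‖ ≤ M * (volume (Ioo (0:ℝ) z₀)).toReal :=
            norm_setIntegral_le_of_norm_le_const measure_Ioo_lt_top hnorm_fM
        _ = M * z₀ := by rw [Real.volume_Ioo, sub_zero, ENNReal.toReal_ofReal hz₀.le]
    have hlogT : Real.log t ≤ Real.log T₀ := Real.log_le_log ht0 htT.le
    have hsq : Real.log t ^ 2 ≤ Real.log T₀ ^ 2 := by nlinarith
    have h1 : t * Real.log t ^ 2 ≤ T₀ * Real.log T₀ ^ 2 :=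
      mul_le_mul htT.le hsq (by positivity) hT₀0.le
    have h2 : M * z₀ * (t * Real.log t ^ 2) ≤ Csmall := by
      rw [hCs]
      exact mul_le_mul_of_nonneg_left h1 (mul_nonneg hM0 hz₀.le)
    rw [le_div_iff₀ htL2]
    calc ‖∫ z in Ioi (0:ℝ), f z‖ * (t * Real.log t ^ 2)
        ≤ (M * z₀) * (t * Real.log t ^ 2) := mul_le_mul_of_nonneg_right hIbound htL2.le
      _ ≤ Csmall := h2
      _ ≤ Clarge + Csmall + 1 := by linarith
  · -- large t
    set δ : ℝ := t⁻¹ with hδdef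
    set σ : ℝ := t ^ (-(1/4) : ℝ) with hσdef
    have hδ0 : 0 < δ := inv_pos.2 ht0
    have hσ0 : 0 < σ := Real.rpow_pos_of_pos ht0 _
    have hz4t : z₀⁻¹ ^ 4 < t := by
      have : z₀⁻¹ ^ 4 + 4 ≤ t := htT
      linarith
    have hσz₀ : σ < z₀ := by
      have h1 : (z₀⁻¹ ^ 4 : ℝ) ^ ((1:ℝ)/4) < t ^ ((1:ℝ)/4) :=
        Real.rpow_lt_rpow (by positivity) hz4t (by norm_num)
      have h2 : (z₀⁻¹ ^ 4 : ℝ) ^ ((1:ℝ)/4) = z₀⁻¹ := by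
        rw [← Real.rpow_natCast z₀⁻¹ 4, ← Real.rpow_mul (inv_pos.2 hz₀).le]
        norm_num
      rw [h2] at h1
      have h3 : σ = (t ^ ((1:ℝ)/4))⁻¹ := by
        rw [hσdef, show (-(1/4) : ℝ) = -((1:ℝ)/4) by norm_num, Real.rpow_neg ht0.le]
      calc σ = (t ^ ((1:ℝ)/4))⁻¹ := h3
        _ < (z₀⁻¹)⁻¹ := inv_strictAnti₀ (inv_pos.2 hz₀) h1
        _ = z₀ := inv_inv z₀
    have hδσ : δ < σ := by
      have h := (Real.rpow_lt_rpow_left_iff ht1).2 (show (-1:ℝ) < -(1/4) by norm_num)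
      rw [Real.rpow_neg_one] at h
      exact h
    have hσhalf : σ < 1/2 := hσz₀.trans hz₀1
    have hδz₀ : δ < z₀ := hδσ.trans hσz₀
    have hδ1 : δ < 1 := by linarith
    have hσ1 : σ < 1 := by linarith
    have hlogδ : Real.log δ = -Real.log t := Real.log_inv t
    have hlogσ : Real.log σ = -(1/4) * Real.log t := Real.log_rpow ht0 _
    have hlogσ2 : (Real.log σ) ^ (-2:ℤ) = 16 * (Real.log t ^ 2)⁻¹ := by
      rw [hlogσ, OscAux.zpow_neg_two,
        show (-(1/4) * Real.log t)^2 = (1/16) * Real.log t ^ 2 by ring, mul_inv]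
      norm_num
    have hlogδ2 : (Real.log δ) ^ (-2:ℤ) = (Real.log t ^ 2)⁻¹ := by
      rw [hlogδ, OscAux.zpow_neg_two, neg_pow]
      norm_num
    -- interval integrability of f on subintervals of [0, z₀]
    have hIcc_sub : ∀ a b : ℝ, 0 ≤ a → b ≤ z₀ → a ≤ b → IntervalIntegrable f volume a b := by
      intro a b ha hb hab
      have : IntegrableOn f (Set.uIcc a b) :=
        hfintIcc.mono_set (by rw [Set.uIcc_of_le hab]; exact Set.Icc_subset_Icc ha hb)
      exact this.intervalIntegrable
    have hi1 : IntervalIntegrable f volume 0 δ := hIcc_sub 0 δ le_rfl hδz₀.le hδ0.le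
    have hi2 : IntervalIntegrable f volume δ σ := hIcc_sub δ σ hδ0.le hσz₀.le hδσ.le
    have hi3 : IntervalIntegrable f volume σ z₀ := hIcc_sub σ z₀ hσ0.le le_rfl hσz₀.le
    have hi12 : IntervalIntegrable f volume 0 σ := hIcc_sub 0 σ le_rfl hσz₀.le hσ0.le
    have hsplit3 : (∫ x in (0:ℝ)..z₀, f x)
        = (∫ x in (0:ℝ)..δ, f x) + (∫ x in δ..σ, f x) + (∫ x in σ..z₀, f x) := by
      rw [intervalIntegral.integral_add_adjacent_intervals hi1 hi2,
          intervalIntegral.integral_add_adjacent_intervals hi12 hi3]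
    -- derivative and norm facts for w
    have hwd : ∀ x : ℝ, HasDerivAt (OscAux.w m t)
        (((x / OscAux.phi m x : ℝ) : ℂ) * OscAux.g m t x) x :=
      OscAux.hasDerivAt_w m t hm (ne_of_gt ht0)
    have hwnorm : ∀ x : ℝ, ‖OscAux.w m t x‖ = 1/t := by
      intro x; rw [OscAux.norm_w, abs_of_pos ht0]
    have hwcont : Continuous (OscAux.w m t) := continuous_const.mul hgcont
    have hv'cont : Continuous (fun x : ℝ => ((x / OscAux.phi m x : ℝ) : ℂ) * OscAux.g m t x) :=
      (Complex.continuous_ofReal.comp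
        (continuous_id.div hφcont fun z => (hφpos z).ne')).mul hgcont
    -- piece 1
    have hp1 : ‖∫ x in (0:ℝ)..δ, f x‖ ≤ c / (t * Real.log t ^ 2) := by
      have hbound1 : ∀ x ∈ Set.uIoc (0:ℝ) δ, ‖f x‖ ≤ c * (Real.log δ) ^ (-2:ℤ) := by
        intro x hx
        rw [Set.uIoc_of_le hδ0.le] at hx
        have hx0 : 0 < x := hx.1
        have hxz : x ∈ Ioo (0:ℝ) z₀ := ⟨hx0, lt_of_le_of_lt hx.2 hδz₀⟩
        exact (hnorm_f x hxz).trans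
          (mul_le_mul_of_nonneg_left (OscAux.inv_sq_log_anti hx0 hx.2 hδ1) hc0)
      calc ‖∫ x in (0:ℝ)..δ, f x‖ ≤ c * (Real.log δ) ^ (-2:ℤ) * |δ - 0| :=
            intervalIntegral.norm_integral_le_of_norm_le_const hbound1
        _ = c / (t * Real.log t ^ 2) := by
            rw [sub_zero, abs_of_pos hδ0, hlogδ2, hδdef]
            ring
    -- piece 2
    have hp2 : ‖∫ x in δ..σ, f x‖ ≤ 25 * c / (t * Real.log t ^ 2) := by
      have huIcc2 : Set.uIcc δ σ = Icc δ σ := Set.uIcc_of_le hδσ.le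
      have hsub2 : Icc δ σ ⊆ Ioo 0 z₀ := fun x hx =>
        ⟨lt_of_lt_of_le hδ0 hx.1, lt_of_le_of_lt hx.2 hσz₀⟩
      have hsub2' : Set.uIcc δ σ ⊆ Ioi 0 := by
        rw [huIcc2]; exact fun x hx => lt_of_lt_of_le hδ0 hx.1
      have hcongr2 : (∫ x in δ..σ, f x)
          = ∫ x in δ..σ, E x * (((x / OscAux.phi m x : ℝ) : ℂ) * OscAux.g m t x) := by
        apply intervalIntegral.integral_congr
        intro x hx
        rw [huIcc2] at hx
        have hχx : χ x = 1 := hχ1 x ⟨le_trans hδ0.le hx.1, le_trans hx.2 hσz₀.le⟩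
        rw [hfg, hχx, mul_one]
        ring
      have hibp2 := intervalIntegral.integral_mul_deriv_eq_deriv_mul
        (u := E) (v := OscAux.w m t) (u' := deriv E)
        (v' := fun x => ((x / OscAux.phi m x : ℝ) : ℂ) * OscAux.g m t x)
        (fun x hx => hEd x (hsub2' hx))
        (fun x _ => hwd x)
        ((hE'c.mono hsub2').intervalIntegrable)
        (hv'cont.intervalIntegrable _ _)
      rw [hcongr2, hibp2]
      have hEσ : ‖E σ‖ ≤ c * (16 * (Real.log t ^ 2)⁻¹) :=
        (hE0 σ ⟨hσ0, hσz₀⟩).trans_eq (by rw [hlogσ2])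
      have hEδ : ‖E δ‖ ≤ c * (Real.log t ^ 2)⁻¹ :=
        (hE0 δ ⟨hδ0, hδz₀⟩).trans_eq (by rw [hlogδ2])
      have hK2 : ‖∫ x in δ..σ, deriv E x * OscAux.w m t x‖
          ≤ (c/t) * ((16 * (Real.log t ^ 2)⁻¹)/2) := by
        have hKint : IntervalIntegrable (fun x => deriv E x * OscAux.w m t x) volume δ σ :=
          ((hE'c.mono hsub2').mul hwcont.continuousOn).intervalIntegrable
        calc ‖∫ x in δ..σ, deriv E x * OscAux.w m t x‖
            ≤ ∫ x in δ..σ, ‖deriv E x * OscAux.w m t x‖ :=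
              intervalIntegral.norm_integral_le_integral_norm hδσ.le
          _ ≤ ∫ x in δ..σ, (c/t) * (x⁻¹ * |Real.log x| ^ (-3:ℤ)) := by
              apply intervalIntegral.integral_mono_on hδσ.le hKint.norm
                ((OscAux.log_int_integrable δ σ hδ0 hδσ.le hσ1).const_mul (c/t))
              intro x hx
              have hxo : x ∈ Ioo (0:ℝ) z₀ := hsub2 hx
              rw [norm_mul, hwnorm x]
              calc ‖deriv E x‖ * (1/t)
                  ≤ (c * x⁻¹ * |Real.log x| ^ (-3:ℤ)) * (1/t) :=
                    mul_le_mul_of_nonneg_right (hE1 x hxo) (by positivity)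
                _ = (c/t) * (x⁻¹ * |Real.log x| ^ (-3:ℤ)) := by ring
          _ = (c/t) * ∫ x in δ..σ, x⁻¹ * |Real.log x| ^ (-3:ℤ) := by
              rw [intervalIntegral.integral_const_mul]
          _ = (c/t) * ((Real.log σ) ^ (-2:ℤ)/2 - (Real.log δ) ^ (-2:ℤ)/2) := by
              rw [OscAux.log_neg_int_integral δ σ hδ0 hδσ.le hσ1]
          _ ≤ (c/t) * ((Real.log σ) ^ (-2:ℤ)/2) := by
              have h1 := OscAux.log_zpow_pos hδ0 hδ1
              have hct : 0 ≤ c/t := by positivity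
              have h2 : (Real.log σ) ^ (-2:ℤ)/2 - (Real.log δ) ^ (-2:ℤ)/2
                  ≤ (Real.log σ) ^ (-2:ℤ)/2 := by linarith
              exact mul_le_mul_of_nonneg_left h2 hct
          _ = (c/t) * ((16 * (Real.log t ^ 2)⁻¹)/2) := by rw [hlogσ2]
      have htri : ‖E σ * OscAux.w m t σ - E δ * OscAux.w m t δ
            - ∫ x in δ..σ, deriv E x * OscAux.w m t x‖
          ≤ ‖E σ * OscAux.w m t σ‖ + ‖E δ * OscAux.w m t δ‖
            + ‖∫ x in δ..σ, deriv E x * OscAux.w m t x‖ := by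
        calc ‖E σ * OscAux.w m t σ - E δ * OscAux.w m t δ
              - ∫ x in δ..σ, deriv E x * OscAux.w m t x‖
            ≤ ‖E σ * OscAux.w m t σ - E δ * OscAux.w m t δ‖
              + ‖∫ x in δ..σ, deriv E x * OscAux.w m t x‖ := norm_sub_le _ _
          _ ≤ ‖E σ * OscAux.w m t σ‖ + ‖E δ * OscAux.w m t δ‖
              + ‖∫ x in δ..σ, deriv E x * OscAux.w m t x‖ := by
              linarith [norm_sub_le (E σ * OscAux.w m t σ) (E δ * OscAux.w m t δ)]
      refine htri.trans ?_
      rw [norm_mul, norm_mul, hwnorm σ, hwnorm δ]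
      have h1 : ‖E σ‖ * (1/t) ≤ (c * (16 * (Real.log t ^ 2)⁻¹)) * (1/t) :=
        mul_le_mul_of_nonneg_right hEσ (by positivity)
      have h2 : ‖E δ‖ * (1/t) ≤ (c * (Real.log t ^ 2)⁻¹) * (1/t) :=
        mul_le_mul_of_nonneg_right hEδ (by positivity)
      have hsum2 : (c * (16 * (Real.log t ^ 2)⁻¹)) * (1/t) + (c * (Real.log t ^ 2)⁻¹) * (1/t)
          + (c/t) * ((16 * (Real.log t ^ 2)⁻¹)/2) = 25 * c / (t * Real.log t ^ 2) := by
        ring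
      linarith [h1, h2, hK2]
    -- piece 3
    have hσsq : σ ^ 2 = t ^ (-(1/2) : ℝ) := by
      rw [hσdef, ← Real.rpow_natCast (t ^ (-(1/4):ℝ)) 2, ← Real.rpow_mul ht0.le]
      norm_num
    have hσt : (σ ^ 2)⁻¹ = t ^ ((1:ℝ)/2) := by
      rw [hσsq, show (-(1/2):ℝ) = -((1:ℝ)/2) by norm_num, Real.rpow_neg ht0.le, inv_inv]
    have hp3 : ‖∫ x in σ..z₀, f x‖ ≤ 16 * c / (t * Real.log t ^ 2)
        + (c * B * Φ + c * B * (Φ + m) / 2) * (t ^ ((1:ℝ)/2) / t ^ 2) := by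
      have huIcc3 : Set.uIcc σ z₀ = Icc σ z₀ := Set.uIcc_of_le hσz₀.le
      have hsub3 : Set.uIcc σ z₀ ⊆ Ioi 0 := by
        rw [huIcc3]; exact fun x hx => lt_of_lt_of_le hσ0 hx.1
      have hsub3o : Ioo σ z₀ ⊆ Ioo 0 z₀ := fun x hx => ⟨lt_trans hσ0 hx.1, hx.2⟩
      have hIt : ‖(Complex.I / (t:ℂ))‖ = 1/t := by
        rw [norm_div, Complex.norm_I, Complex.norm_real, Real.norm_eq_abs, abs_of_pos ht0]
      -- first IBP on [σ, z₀]
      have hcongr3 : (∫ x in σ..z₀, f x)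
          = ∫ x in σ..z₀, E x * (((x / OscAux.phi m x : ℝ) : ℂ) * OscAux.g m t x) := by
        apply intervalIntegral.integral_congr
        intro x hx
        have hx0 : (0:ℝ) < x := hsub3 hx
        rw [huIcc3] at hx
        have hχx : χ x = 1 := hχ1 x ⟨hx0.le, hx.2⟩
        rw [hfg, hχx, mul_one]
        ring
      have hibp3a := intervalIntegral.integral_mul_deriv_eq_deriv_mul
        (u := E) (v := OscAux.w m t) (u' := deriv E)
        (v' := fun x => ((x / OscAux.phi m x : ℝ) : ℂ) * OscAux.g m t x)
        (fun x hx => hEd x (hsub3 hx))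
        (fun x _ => hwd x)
        ((hE'c.mono hsub3).intervalIntegrable)
        (hv'cont.intervalIntegrable _ _)
      rw [hcongr3, hibp3a, hsupp z₀ le_rfl, zero_mul, zero_sub]
      -- second IBP for the remaining integral
      set u₃ : ℝ → ℂ := fun x =>
        deriv E x * ((OscAux.phi m x / x : ℝ) : ℂ) * (Complex.I / (t:ℂ)) with hu₃def
      set u₃' : ℝ → ℂ := fun x =>
        (deriv (deriv E) x * ((OscAux.phi m x / x : ℝ) : ℂ)
          + deriv E x * ((-(m ^ 2) / (OscAux.phi m x * x ^ 2) : ℝ) : ℂ)) * (Complex.I / (t:ℂ))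
        with hu₃'def
      have hrcont : ContinuousOn (fun x : ℝ => ((OscAux.phi m x / x : ℝ) : ℂ)) (Set.uIcc σ z₀) :=
        Complex.continuous_ofReal.comp_continuousOn
          ((hφcont.continuousOn.div continuousOn_id) fun x hx => ne_of_gt (hsub3 hx))
      have hr'cont : ContinuousOn
          (fun x : ℝ => ((-(m ^ 2) / (OscAux.phi m x * x ^ 2) : ℝ) : ℂ)) (Set.uIcc σ z₀) :=
        Complex.continuous_ofReal.comp_continuousOn
          ((continuousOn_const.div ((hφcont.continuousOn.mul ((continuous_pow 2).continuousOn))))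
            fun x hx => ne_of_gt (mul_pos (hφpos x) (pow_pos (hsub3 hx) 2)))
      have hu₃'cont : ContinuousOn u₃' (Set.uIcc σ z₀) := by
        apply ContinuousOn.mul ?_ continuousOn_const
        exact (((hE''c.mono hsub3).mul hrcont).add ((hE'c.mono hsub3).mul hr'cont))
      have hu₃d : ∀ x ∈ Set.uIcc σ z₀, HasDerivAt u₃ (u₃' x) x := by
        intro x hx
        have hx0 : (0:ℝ) < x := hsub3 hx
        exact ((hE'd x hx0).mul
          ((OscAux.hasDerivAt_phi_div m hm x hx0).ofReal_comp)).mul_const _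
      have hcongr3b : (∫ x in σ..z₀, deriv E x * OscAux.w m t x)
          = ∫ x in σ..z₀, u₃ x * (((x / OscAux.phi m x : ℝ) : ℂ) * OscAux.g m t x) := by
        apply intervalIntegral.integral_congr
        intro x hx
        have hx0 : (0:ℝ) < x := hsub3 hx
        have hφx := hφpos x
        have hxc : (x:ℂ) ≠ 0 := Complex.ofReal_ne_zero.2 hx0.ne'
        have hφc : ((OscAux.phi m x : ℝ):ℂ) ≠ 0 := Complex.ofReal_ne_zero.2 hφx.ne'
        have htc : (t:ℂ) ≠ 0 := Complex.ofReal_ne_zero.2 ht0.ne'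
        simp only [hu₃def, OscAux.w]
        push_cast
        field_simp
      have hibp3b := intervalIntegral.integral_mul_deriv_eq_deriv_mul
        (u := u₃) (v := OscAux.w m t) (u' := u₃')
        (v' := fun x => ((x / OscAux.phi m x : ℝ) : ℂ) * OscAux.g m t x)
        hu₃d (fun x _ => hwd x)
        (hu₃'cont.intervalIntegrable)
        (hv'cont.intervalIntegrable _ _)
      have hu₃z₀ : u₃ z₀ = 0 := by
        simp only [hu₃def, hderivz₀, zero_mul]
      rw [hcongr3b, hibp3b, hu₃z₀, zero_mul, zero_sub]
      -- now the goal involves -(E σ * w σ) - (-(u₃ σ * w σ) - ∫ u₃' * w)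
      -- bound each term
      have hEσn : ‖E σ * OscAux.w m t σ‖ ≤ 16 * c / (t * Real.log t ^ 2) := by
        rw [norm_mul, hwnorm σ]
        have h := (hE0 σ ⟨hσ0, hσz₀⟩).trans_eq (by rw [hlogσ2] :
          c * (Real.log σ) ^ (-2:ℤ) = c * (16 * (Real.log t ^ 2)⁻¹))
        calc ‖E σ‖ * (1/t) ≤ (c * (16 * (Real.log t ^ 2)⁻¹)) * (1/t) :=
              mul_le_mul_of_nonneg_right h (by positivity)
          _ = 16 * c / (t * Real.log t ^ 2) := by ring
      have hu₃σn : ‖u₃ σ * OscAux.w m t σ‖ ≤ c * B * Φ * (t ^ ((1:ℝ)/2) / t ^ 2) := by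
        rw [norm_mul, hwnorm σ]
        have hE'σ : ‖deriv E σ‖ ≤ c * σ⁻¹ * B := by
          refine (hE1 σ ⟨hσ0, hσz₀⟩).trans ?_
          rw [hBdef]
          exact mul_le_mul_of_nonneg_left (OscAux.abs_log_cube_le hσ0 hσhalf) (by positivity)
        have hφσ : OscAux.phi m σ ≤ Φ := OscAux.phi_mono m σ z₀ hσz₀.le hσ0.le
        have hrσ : |OscAux.phi m σ / σ| ≤ Φ / σ := by
          rw [abs_of_pos (div_pos (hφpos σ) hσ0)]
          exact (div_le_div_iff_of_pos_right hσ0).2 hφσ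
        have hn : ‖u₃ σ‖ ≤ (c * σ⁻¹ * B) * (Φ / σ) * (1/t) := by
          simp only [hu₃def]
          rw [norm_mul, norm_mul, Complex.norm_real, Real.norm_eq_abs, hIt]
          refine mul_le_mul_of_nonneg_right ?_ (by positivity)
          exact mul_le_mul hE'σ hrσ (abs_nonneg _) (by positivity)
        calc ‖u₃ σ‖ * (1/t) ≤ ((c * σ⁻¹ * B) * (Φ / σ) * (1/t)) * (1/t) :=
              mul_le_mul_of_nonneg_right hn (by positivity)
          _ = c * B * Φ * ((σ ^ 2)⁻¹ * (1 / t ^ 2)) := by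
              field_simp [hσ0.ne', ht0.ne']
              try tauto
          _ = c * B * Φ * (t ^ ((1:ℝ)/2) / t ^ 2) := by rw [hσt]; ring_nf
      have hintn : ‖∫ x in σ..z₀, u₃' x * OscAux.w m t x‖
          ≤ c * B * (Φ + m) / 2 * (t ^ ((1:ℝ)/2) / t ^ 2) := by
        set P : ℝ := c * B * (Φ + m) with hPdef
        have hP0 : 0 ≤ P := by positivity
        have hu₃wint : IntervalIntegrable (fun x => u₃' x * OscAux.w m t x) volume σ z₀ :=
          (hu₃'cont.mul hwcont.continuousOn).intervalIntegrable
        have hnormint : IntegrableOn (fun x => ‖u₃' x * OscAux.w m t x‖) (Ioo σ z₀) := by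
          have := (intervalIntegrable_iff_integrableOn_Ioc_of_le hσz₀.le).1 hu₃wint.norm
          exact this.mono_set Set.Ioo_subset_Ioc_self
        have hcubcont : ContinuousOn (fun x : ℝ => (P / (t*t)) * (x ^ 3)⁻¹) (Set.uIcc σ z₀) :=
          continuousOn_const.mul (((continuous_pow 3).continuousOn).inv₀
            fun x hx => pow_ne_zero 3 (ne_of_gt (hsub3 hx)))
        have hcubint : IntervalIntegrable (fun x : ℝ => (P / (t*t)) * (x ^ 3)⁻¹) volume σ z₀ :=
          hcubcont.intervalIntegrable
        have hcubint' : IntegrableOn (fun x : ℝ => (P / (t*t)) * (x ^ 3)⁻¹) (Ioo σ z₀) := by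
          have := (intervalIntegrable_iff_integrableOn_Ioc_of_le hσz₀.le).1 hcubint
          exact this.mono_set Set.Ioo_subset_Ioc_self
        have hptw : ∀ x ∈ Ioo σ z₀, ‖u₃' x * OscAux.w m t x‖ ≤ (P / (t*t)) * (x ^ 3)⁻¹ := by
          intro x hx
          have hx0 : (0:ℝ) < x := lt_trans hσ0 hx.1
          have hxo : x ∈ Ioo (0:ℝ) z₀ := hsub3o hx
          have hxhalf : x < 1/2 := lt_trans hx.2 hz₀1
          have hφx := hφpos x
          have hA : ‖deriv (deriv E) x * ((OscAux.phi m x / x : ℝ) : ℂ)‖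
              ≤ c * B * Φ * (x ^ 3)⁻¹ := by
            rw [norm_mul, Complex.norm_real, Real.norm_eq_abs]
            have h1 : ‖deriv (deriv E) x‖ ≤ c * (x ^ 2)⁻¹ * B := by
              refine (hE2 x hxo).trans ?_
              rw [hBdef]
              exact mul_le_mul_of_nonneg_left (OscAux.abs_log_cube_le hx0 hxhalf) (by positivity)
            have h2 : |OscAux.phi m x / x| ≤ Φ / x := by
              rw [abs_of_pos (div_pos hφx hx0)]
              exact (div_le_div_iff_of_pos_right hx0).2 (OscAux.phi_mono m x z₀ hxo.2.le hx0.le)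
            calc ‖deriv (deriv E) x‖ * |OscAux.phi m x / x|
                ≤ (c * (x ^ 2)⁻¹ * B) * (Φ / x) :=
                  mul_le_mul h1 h2 (abs_nonneg _) (by positivity)
              _ = c * B * Φ * (x ^ 3)⁻¹ := by field_simp [hx0.ne']; try tauto
          have hBt : ‖deriv E x * ((-(m ^ 2) / (OscAux.phi m x * x ^ 2) : ℝ) : ℂ)‖
              ≤ c * B * m * (x ^ 3)⁻¹ := by
            rw [norm_mul, Complex.norm_real, Real.norm_eq_abs]
            have h1 : ‖deriv E x‖ ≤ c * x⁻¹ * B := by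
              refine (hE1 x hxo).trans ?_
              rw [hBdef]
              exact mul_le_mul_of_nonneg_left (OscAux.abs_log_cube_le hx0 hxhalf) (by positivity)
            have h2 : |(-(m ^ 2) / (OscAux.phi m x * x ^ 2))| ≤ m / x ^ 2 := by
              rw [abs_div, abs_neg, abs_of_nonneg (sq_nonneg m),
                abs_of_pos (mul_pos hφx (pow_pos hx0 2))]
              have h3 : m ^ 2 / (OscAux.phi m x * x ^ 2) ≤ m ^ 2 / (m * x ^ 2) :=
                div_le_div_of_nonneg_left (sq_nonneg m) (mul_pos hm (pow_pos hx0 2))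
                  (mul_le_mul_of_nonneg_right (OscAux.m_le_phi m hm.le x) (sq_nonneg x))
              have h4 : m ^ 2 / (m * x ^ 2) = m / x ^ 2 := by
                field_simp [hm.ne']
              rw [h4] at h3
              exact h3
            calc ‖deriv E x‖ * |(-(m ^ 2) / (OscAux.phi m x * x ^ 2))|
                ≤ (c * x⁻¹ * B) * (m / x ^ 2) :=
                  mul_le_mul h1 h2 (abs_nonneg _) (by positivity)
              _ = c * B * m * (x ^ 3)⁻¹ := by field_simp [hx0.ne']; try tauto
          calc ‖u₃' x * OscAux.w m t x‖ = ‖u₃' x‖ * (1/t) := by rw [norm_mul, hwnorm x]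
            _ ≤ ((c * B * Φ * (x ^ 3)⁻¹ + c * B * m * (x ^ 3)⁻¹) * (1/t)) * (1/t) := by
                refine mul_le_mul_of_nonneg_right ?_ (by positivity)
                simp only [hu₃'def]
                rw [norm_mul, hIt]
                refine mul_le_mul_of_nonneg_right ?_ (by positivity)
                exact (norm_add_le _ _).trans (add_le_add hA hBt)
            _ = (P / (t*t)) * (x ^ 3)⁻¹ := by rw [hPdef]; field_simp [hx0.ne', ht0.ne']; try tauto
        have hzpow : (∫ x in σ..z₀, (x:ℝ) ^ (-3:ℤ)) = ((z₀:ℝ) ^ (-2:ℤ) - σ ^ (-2:ℤ)) / (-2) := by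
          have hmem : (0:ℝ) ∉ Set.uIcc σ z₀ := by
            rw [huIcc3]
            exact fun h => absurd h.1 (not_le.2 hσ0)
          have h := integral_zpow (a := σ) (b := z₀) (n := -3) (Or.inr ⟨by norm_num, hmem⟩)
          norm_num at h
          convert h using 2 <;> norm_num
        have hcubeq : (∫ x in σ..z₀, (x ^ 3 : ℝ)⁻¹) = (σ ^ (-2:ℤ) - (z₀:ℝ) ^ (-2:ℤ)) / 2 := by
          have hc1 : (∫ x in σ..z₀, (x ^ 3 : ℝ)⁻¹) = ∫ x in σ..z₀, (x:ℝ) ^ (-3:ℤ) :=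
            intervalIntegral.integral_congr fun x _ => (OscAux.zpow_neg_three x).symm
          rw [hc1, hzpow]
          ring
        calc ‖∫ x in σ..z₀, u₃' x * OscAux.w m t x‖
            ≤ ∫ x in σ..z₀, ‖u₃' x * OscAux.w m t x‖ :=
              intervalIntegral.norm_integral_le_integral_norm hσz₀.le
          _ ≤ ∫ x in σ..z₀, (P / (t*t)) * (x ^ 3)⁻¹ := by
              rw [intervalIntegral.integral_of_le hσz₀.le, integral_Ioc_eq_integral_Ioo,
                intervalIntegral.integral_of_le hσz₀.le, integral_Ioc_eq_integral_Ioo]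
              exact setIntegral_mono_on hnormint hcubint' measurableSet_Ioo hptw
          _ = (P / (t*t)) * ((σ ^ (-2:ℤ) - (z₀:ℝ) ^ (-2:ℤ)) / 2) := by
              rw [intervalIntegral.integral_const_mul, hcubeq]
          _ ≤ (P / (t*t)) * (σ ^ (-2:ℤ) / 2) := by
              refine mul_le_mul_of_nonneg_left ?_ (by positivity)
              have : (0:ℝ) ≤ (z₀:ℝ) ^ (-2:ℤ) := by
                rw [OscAux.zpow_neg_two]; positivity
              linarith
          _ = c * B * (Φ + m) / 2 * (t ^ ((1:ℝ)/2) / t ^ 2) := by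
              rw [OscAux.zpow_neg_two, hσt, hPdef]
              field_simp [ht0.ne']
              try tauto
      -- combine
      calc ‖-(E σ * OscAux.w m t σ)
            - (-(u₃ σ * OscAux.w m t σ) - ∫ x in σ..z₀, u₃' x * OscAux.w m t x)‖
          ≤ ‖E σ * OscAux.w m t σ‖ + (‖u₃ σ * OscAux.w m t σ‖
              + ‖∫ x in σ..z₀, u₃' x * OscAux.w m t x‖) := by
            refine (norm_sub_le _ _).trans ?_
            rw [norm_neg]
            gcongr
            exact (norm_sub_le _ _).trans (by rw [norm_neg])
        _ ≤ 16 * c / (t * Real.log t ^ 2)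
            + (c * B * Φ + c * B * (Φ + m) / 2) * (t ^ ((1:ℝ)/2) / t ^ 2) := by
            have := add_le_add hu₃σn hintn
            have h2 : c * B * Φ * (t ^ ((1:ℝ)/2) / t ^ 2)
                + c * B * (Φ + m) / 2 * (t ^ ((1:ℝ)/2) / t ^ 2)
                = (c * B * Φ + c * B * (Φ + m) / 2) * (t ^ ((1:ℝ)/2) / t ^ 2) := by ring
            linarith [hEσn]
    -- power comparison
    have hpow : t ^ ((1:ℝ)/2) / t ^ 2 ≤ 16 / (t * Real.log t ^ 2) := by
      have hq := Real.rpow_pos_of_pos ht0 ((1:ℝ)/4)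
      have hh := Real.rpow_pos_of_pos ht0 ((1:ℝ)/2)
      have h14 : (1/4) * Real.log t ≤ t ^ ((1:ℝ)/4) := by
        have h := Real.log_le_sub_one_of_pos hq
        rw [Real.log_rpow ht0] at h
        linarith
      have hqq : (t ^ ((1:ℝ)/4)) ^ 2 = t ^ ((1:ℝ)/2) := by
        rw [← Real.rpow_natCast (t ^ ((1:ℝ)/4)) 2, ← Real.rpow_mul ht0.le]
        norm_num
      have hsq : Real.log t ^ 2 ≤ 16 * t ^ ((1:ℝ)/2) := by
        have hL4 : Real.log t ≤ 4 * t ^ ((1:ℝ)/4) := by linarith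
        calc Real.log t ^ 2 ≤ (4 * t ^ ((1:ℝ)/4)) ^ 2 := by
              exact pow_le_pow_left₀ hL.le hL4 2
          _ = 16 * (t ^ ((1:ℝ)/4)) ^ 2 := by ring
          _ = 16 * t ^ ((1:ℝ)/2) := by rw [hqq]
      have hhalf : t ^ ((1:ℝ)/2) * t ^ ((1:ℝ)/2) = t := by
        rw [← Real.rpow_add ht0]; norm_num
      rw [div_le_div_iff₀ (by positivity) htL2]
      calc t ^ ((1:ℝ)/2) * (t * Real.log t ^ 2)
          ≤ t ^ ((1:ℝ)/2) * (t * (16 * t ^ ((1:ℝ)/2))) := by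
            apply mul_le_mul_of_nonneg_left ?_ hh.le
            exact mul_le_mul_of_nonneg_left hsq ht0.le
        _ = 16 * (t ^ ((1:ℝ)/2) * t ^ ((1:ℝ)/2)) * t := by ring
        _ = 16 * t * t := by rw [hhalf]
        _ = 16 * t ^ 2 := by ring
    -- assemble
    have hcoef : 0 ≤ c * B * Φ + c * B * (Φ + m) / 2 := by positivity
    rw [hIeq, hsplit3]
    have hnorm3 : ‖(∫ x in (0:ℝ)..δ, f x) + (∫ x in δ..σ, f x) + (∫ x in σ..z₀, f x)‖
        ≤ ‖∫ x in (0:ℝ)..δ, f x‖ + ‖∫ x in δ..σ, f x‖ + ‖∫ x in σ..z₀, f x‖ :=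
      norm_add₃_le
    have hlast : (c * B * Φ + c * B * (Φ + m) / 2) * (t ^ ((1:ℝ)/2) / t ^ 2)
        ≤ (c * B * Φ + c * B * (Φ + m) / 2) * (16 / (t * Real.log t ^ 2)) :=
      mul_le_mul_of_nonneg_left hpow hcoef
    have hsum : c / (t * Real.log t ^ 2) + 25 * c / (t * Real.log t ^ 2)
        + (16 * c / (t * Real.log t ^ 2)
            + (c * B * Φ + c * B * (Φ + m) / 2) * (16 / (t * Real.log t ^ 2)))
        = Clarge / (t * Real.log t ^ 2) := by
      rw [hCl]; ring
    have hfin : Clarge / (t * Real.log t ^ 2) ≤ (Clarge + Csmall + 1) / (t * Real.log t ^ 2) := by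
      exact (div_le_div_iff_of_pos_right htL2).2 (by linarith)
    calc ‖(∫ x in (0:ℝ)..δ, f x) + (∫ x in δ..σ, f x) + (∫ x in σ..z₀, f x)‖
        ≤ ‖∫ x in (0:ℝ)..δ, f x‖ + ‖∫ x in δ..σ, f x‖ + ‖∫ x in σ..z₀, f x‖ := hnorm3
      _ ≤ Clarge / (t * Real.log t ^ 2) := by rw [← hsum]; linarith [hp1, hp2, hp3, hlast]
      _ ≤ (Clarge + Csmall + 1) / (t * Real.log t ^ 2) := hfin
end

section
/- Let φ : ℝ → ℝ be C² with φ'(z₀) = 0 and 1 ≤ φ''(z) ≤ C for all z, and let a : ℝ → ℂ be C¹ with sufficient decay. Then for t > 0, | ∫_{-∞}^{∞} e^{-itφ(z)} a(z) dz | ≲ ∫_{|z-z₀| < t^{-1/2}} |a(z)| dz + t^{-1} ∫_{|z-z₀| > t^{-1/2}} ( |a(z)|/|z-z₀|² + |a'(z)|/|z-z₀| ) dz. -/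
set_option autoImplicit false

open MeasureTheory Real Set

/-!
Split `a = a (1 - ψ) + a ψ` with a smooth cutoff `ψ` that vanishes on `|z - z₀| ≤ r` and equals `1`
on `|z - z₀| ≥ 2r`, where `r = t^(-1/2)`. The piece `a (1 - ψ)` lives on `|z - z₀| < 2r` and is
bounded trivially, using `1 ≤ 4r² / |z - z₀|²` on `r < |z - z₀| < 2r`. On the support of `a ψ` the
phase is non-stationary: `1 ≤ φ''` gives `|z - z₀| ≤ |φ'(z)|`, so one integration by parts against
`e^(-itφ) = (-itφ')⁻¹ (e^(-itφ))'` gains `t⁻¹` and leaves `|(aψ/φ')'|`, which is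
`≲ |a'| / |z - z₀| + |a| / |z - z₀|²` because `|ψ'| ≲ 1 / |z - z₀|` and `φ'' ≤ C`.
-/

open Filter Topology

namespace Real.smoothTransition

theorem deriv_eq_zero_of_neg {x : ℝ} (hx : x < 0) : deriv smoothTransition x = 0 := by
  have : smoothTransition =ᶠ[𝓝 x] fun _ => 0 :=
    (eventually_lt_nhds hx).mono fun _ hy => zero_of_nonpos hy.le
  rw [this.deriv_eq, deriv_const]

theorem deriv_eq_zero_of_one_lt {x : ℝ} (hx : 1 < x) : deriv smoothTransition x = 0 := by
  have : smoothTransition =ᶠ[𝓝 x] fun _ => 1 :=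
    (eventually_gt_nhds hx).mono fun _ hy => one_of_one_le hy.le
  rw [this.deriv_eq, deriv_const]

theorem exists_abs_deriv_le : ∃ M, ∀ x, |deriv smoothTransition x| ≤ M := by
  have hsupp : HasCompactSupport (deriv smoothTransition) := by
    refine HasCompactSupport.intro (isCompact_Icc (a := 0) (b := 1)) fun x hx => ?_
    rcases not_and_or.1 hx with h | h
    · exact deriv_eq_zero_of_neg (not_le.1 h)
    · exact deriv_eq_zero_of_one_lt (not_le.1 h)
  exact ((smoothTransition.contDiff (n := 1)).continuous_deriv le_rfl)
    |>.bounded_above_of_compact_support hsupp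

end Real.smoothTransition

noncomputable def annularCutoff (z₀ r z : ℝ) : ℝ :=
  smoothTransition (((z - z₀) ^ 2 - r ^ 2) / (3 * r ^ 2))

namespace annularCutoff

variable {z₀ r z : ℝ}

theorem contDiff {n : ℕ∞} : ContDiff ℝ n (annularCutoff z₀ r) :=
  smoothTransition.contDiff.comp (by fun_prop)

theorem nonneg (z₀ r z : ℝ) : 0 ≤ annularCutoff z₀ r z := smoothTransition.nonneg _

theorem le_one (z₀ r z : ℝ) : annularCutoff z₀ r z ≤ 1 := smoothTransition.le_one _

theorem eq_zero (h : |z - z₀| ≤ r) : annularCutoff z₀ r z = 0 := by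
  refine smoothTransition.zero_of_nonpos (div_nonpos_of_nonpos_of_nonneg ?_ (by positivity))
  nlinarith [sq_abs (z - z₀), abs_nonneg (z - z₀)]

theorem eq_one (hr : 0 < r) (h : 2 * r ≤ |z - z₀|) : annularCutoff z₀ r z = 1 := by
  refine smoothTransition.one_of_one_le ((le_div_iff₀ (by positivity)).2 ?_)
  nlinarith [sq_abs (z - z₀)]

theorem eventuallyEq_zero (hr : 0 < r) : annularCutoff z₀ r =ᶠ[𝓝 z₀] 0 :=
  eventually_of_mem (Metric.ball_mem_nhds z₀ hr) fun _ hz =>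
    eq_zero (le_of_lt (by simpa [Real.dist_eq] using hz))

theorem deriv_eq_zero (h : |z - z₀| ≤ r) : deriv (annularCutoff z₀ r) z = 0 :=
  IsLocalMin.deriv_eq_zero <| Eventually.of_forall fun _ => (eq_zero h).symm ▸ nonneg _ _ _

theorem hasDerivAt : HasDerivAt (annularCutoff z₀ r)
    (deriv smoothTransition (((z - z₀) ^ 2 - r ^ 2) / (3 * r ^ 2)) *
      (2 * (z - z₀) / (3 * r ^ 2))) z := by
  have hinner : HasDerivAt (fun z => ((z - z₀) ^ 2 - r ^ 2) / (3 * r ^ 2))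
      (2 * (z - z₀) / (3 * r ^ 2)) z := by
    simpa using ((((hasDerivAt_id z).sub_const z₀).pow 2).sub_const (r ^ 2)).div_const (3 * r ^ 2)
  exact ((smoothTransition.contDiff (n := 1)).differentiable one_ne_zero _).hasDerivAt.comp z hinner

theorem exists_abs_deriv_mul_le :
    ∃ M, 0 ≤ M ∧ ∀ z₀ r z : ℝ, 0 < r → |deriv (annularCutoff z₀ r) z| * |z - z₀| ≤ M := by
  obtain ⟨M, hM⟩ := smoothTransition.exists_abs_deriv_le
  have hM0 : 0 ≤ M := (abs_nonneg _).trans (hM 0)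
  refine ⟨3 * M, by positivity, fun z₀ r z hr => ?_⟩
  rw [hasDerivAt.deriv, abs_mul, mul_assoc]
  rcases le_or_gt |z - z₀| (2 * r) with h | h
  · have : |2 * (z - z₀) / (3 * r ^ 2)| * |z - z₀| ≤ 3 := by
      rw [abs_div, abs_mul, abs_two, abs_of_pos (by positivity : 0 < 3 * r ^ 2),
        div_mul_eq_mul_div, div_le_iff₀ (by positivity)]
      nlinarith [sq_abs (z - z₀), abs_nonneg (z - z₀)]
    nlinarith [hM (((z - z₀) ^ 2 - r ^ 2) / (3 * r ^ 2)), abs_nonneg (deriv smoothTransition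
      (((z - z₀) ^ 2 - r ^ 2) / (3 * r ^ 2))), abs_nonneg (2 * (z - z₀) / (3 * r ^ 2))]
  · rw [smoothTransition.deriv_eq_zero_of_one_lt, abs_zero, zero_mul]
    · positivity
    · rw [lt_div_iff₀ (by positivity)]
      nlinarith [sq_abs (z - z₀), abs_nonneg (z - z₀)]

end annularCutoff

theorem abs_sub_le_abs_sub_of_one_le_deriv {g : ℝ → ℝ} (hg : Differentiable ℝ g)
    (h : ∀ z, 1 ≤ deriv g z) (x y : ℝ) : |x - y| ≤ |g x - g y| := by
  wlog hxy : y ≤ x generalizing x y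
  · rw [abs_sub_comm, abs_sub_comm (g x)]
    exact this y x (le_of_not_ge hxy)
  have := mul_sub_le_image_sub_of_le_deriv hg h hxy
  rw [abs_of_nonneg (sub_nonneg.2 hxy)]
  linarith [le_abs_self (g x - g y)]

theorem norm_exp_neg_I_mul (t x : ℝ) : ‖Complex.exp (-Complex.I * t * x)‖ = 1 := by
  simp [Complex.norm_exp]

section DivisionByPhase

variable {b : ℝ → ℂ} {g : ℝ → ℝ}

theorem contDiff_div_ofReal {n : ℕ∞} (hb : ContDiff ℝ n b) (hg : ContDiff ℝ n g)
    (hb0 : ∀ z, g z = 0 → b =ᶠ[𝓝 z] 0) : ContDiff ℝ n fun z => b z / g z := by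
  refine contDiff_iff_contDiffAt.2 fun z => ?_
  by_cases hz : g z = 0
  · exact (contDiffAt_const (c := (0 : ℂ))).congr_of_eventuallyEq
      ((hb0 z hz).mono fun w hw => by simp [hw])
  · have : ContDiffAt ℝ n (fun w => (g w : ℂ)) z := (Complex.ofRealCLM.contDiff.comp hg).contDiffAt
    simpa [div_eq_mul_inv] using hb.contDiffAt.mul (this.inv (by exact_mod_cast hz))

theorem norm_deriv_div_ofReal_le (hb : Differentiable ℝ b) (hg : Differentiable ℝ g)
    (hb0 : ∀ z, g z = 0 → b =ᶠ[𝓝 z] 0) (z : ℝ) :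
    ‖deriv (fun w => b w / g w) z‖ ≤ ‖deriv b z‖ / |g z| + ‖b z‖ * |deriv g z| / g z ^ 2 := by
  by_cases hz : g z = 0
  · have : (fun w => b w / g w) =ᶠ[𝓝 z] fun _ => 0 := (hb0 z hz).mono fun w hw => by simp [hw]
    rw [this.deriv_eq, deriv_const, norm_zero]
    positivity
  have hgz : 0 < |g z| := abs_pos.2 hz
  rw [((hb z).hasDerivAt.fun_div (hg z).hasDerivAt.ofReal_comp (by exact_mod_cast hz)).deriv,
    norm_div, norm_pow, Complex.norm_real, Real.norm_eq_abs, ← sq_abs (g z),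
    div_le_iff₀ (by positivity)]
  calc ‖deriv b z * g z - b z * deriv g z‖ ≤ ‖deriv b z‖ * |g z| + ‖b z‖ * |deriv g z| := by
        simpa using norm_sub_le (deriv b z * g z) (b z * deriv g z)
    _ = (‖deriv b z‖ / |g z| + ‖b z‖ * |deriv g z| / |g z| ^ 2) * |g z| ^ 2 := by
        field_simp

end DivisionByPhase

section IntegrationByParts

variable {φ : ℝ → ℝ} {b : ℝ → ℂ} {t : ℝ}

theorem integral_exp_mul_eq (hφ : ContDiff ℝ 2 φ) (hb : ContDiff ℝ 1 b)
    (hsupp : HasCompactSupport b) (hb0 : ∀ z, deriv φ z = 0 → b =ᶠ[𝓝 z] 0) (ht : t ≠ 0) :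
    ∫ z, Complex.exp (-Complex.I * t * φ z) * b z =
      (Complex.I * t)⁻¹ *
        ∫ z, deriv (fun w => b w / deriv φ w) z * Complex.exp (-Complex.I * t * φ z) := by
  set u : ℝ → ℂ := fun w => b w / deriv φ w
  set v : ℝ → ℂ := fun z => Complex.exp (-Complex.I * t * φ z)
  set v' : ℝ → ℂ := fun z => -Complex.I * t * deriv φ z * v z
  have hu : ContDiff ℝ 1 u := contDiff_div_ofReal hb hφ.deriv' hb0
  have hu_supp : HasCompactSupport u := hsupp.mono fun z hz h => hz (by simp [u, h])
  have hv : ∀ z, HasDerivAt v (v' z) z := fun z => by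
    simpa [v, v', mul_comm, mul_assoc] using
      (((hφ.differentiable two_ne_zero z).hasDerivAt.ofReal_comp).const_mul
        (-Complex.I * t)).cexp
  have hφc : Continuous φ := hφ.continuous
  have hφ'c : Continuous (deriv φ) := hφ.continuous_deriv one_le_two
  have hvc : Continuous v := by fun_prop
  have hv'c : Continuous v' := by fun_prop
  -- where `φ' = 0`, both sides vanish because `b` does
  have huv' : ∀ z, u z * v' z = -Complex.I * t * (v z * b z) := fun z => by
    by_cases hz : deriv φ z = 0
    · simp [u, v', hz, (hb0 z hz).self_of_nhds]
    · have hz' : ((deriv φ z : ℝ) : ℂ) ≠ 0 := by exact_mod_cast hz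
      simp only [u, v']
      field_simp
  have hibp := integral_mul_deriv_eq_deriv_mul_of_integrable (u := u) (v := v)
    (fun z _ => ((hu.differentiable one_ne_zero) z).hasDerivAt) (fun z _ => hv z)
    ((hu.continuous.mul hv'c).integrable_of_hasCompactSupport hu_supp.mul_right)
    (((hu.continuous_deriv le_rfl).mul hvc).integrable_of_hasCompactSupport
      hu_supp.deriv.mul_right)
    ((hu.continuous.mul hvc).integrable_of_hasCompactSupport hu_supp.mul_right)
  simp_rw [huv', integral_const_mul] at hibp
  rw [eq_inv_mul_iff_mul_eq₀ (by simp [ht])]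
  linear_combination -hibp

theorem norm_integral_exp_mul_le (hφ : ContDiff ℝ 2 φ) (hb : ContDiff ℝ 1 b)
    (hsupp : HasCompactSupport b) (hb0 : ∀ z, deriv φ z = 0 → b =ᶠ[𝓝 z] 0) (ht : t ≠ 0) :
    ‖∫ z, Complex.exp (-Complex.I * t * φ z) * b z‖ ≤
      |t|⁻¹ * ∫ z, ‖deriv (fun w => b w / deriv φ w) z‖ := by
  rw [integral_exp_mul_eq hφ hb hsupp hb0 ht, norm_mul, norm_inv, norm_mul, Complex.norm_I,
    one_mul, Complex.norm_real, Real.norm_eq_abs]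
  gcongr
  refine (norm_integral_le_integral_norm _).trans_eq ?_
  simp_rw [norm_mul, norm_exp_neg_I_mul, mul_one]

end IntegrationByParts

theorem measurableSet_abs_sub_lt (z₀ r : ℝ) : MeasurableSet {z : ℝ | |z - z₀| < r} :=
  measurableSet_lt (by fun_prop) measurable_const

theorem measurableSet_lt_abs_sub (z₀ r : ℝ) : MeasurableSet {z : ℝ | r < |z - z₀|} :=
  measurableSet_lt measurable_const (by fun_prop)

theorem integral_mul_eq_mul_one_sub_add_mul {f a : ℝ → ℂ} {c : ℝ → ℝ} (hf : Continuous f)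
    (ha : Continuous a) (hsupp : HasCompactSupport a) (hc : Continuous c) :
    ∫ z, f z * a z = (∫ z, f z * (a z * ((1 - c z : ℝ) : ℂ))) + ∫ z, f z * (a z * c z) := by
  have hint : ∀ g : ℝ → ℝ, Continuous g → Integrable fun z => f z * (a z * g z) := fun g hg =>
    (by fun_prop : Continuous _).integrable_of_hasCompactSupport
      (hsupp.mono fun z hz h => hz (by simp [h]))
  rw [← integral_add (hint _ (by fun_prop)) (hint c hc)]
  congr with z
  push_cast
  ring

theorem ae_abs_sub_ne (z₀ r : ℝ) : ∀ᵐ z : ℝ, |z - z₀| ≠ r := by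
  filter_upwards [measure_eq_zero_iff_ae_notMem.1 (Measure.addHaar_sphere volume z₀ r)] with z hz
  simpa [Real.dist_eq] using hz

theorem integrableOn_div_abs_sub_pow {f : ℝ → ℝ} (hf : Integrable f) {z₀ r : ℝ} (hr : 0 < r)
    (n : ℕ) : IntegrableOn (fun z => f z / |z - z₀| ^ n) {z | r < |z - z₀|} := by
  refine Integrable.mono' (hf.norm.div_const (r ^ n)).integrableOn
    (hf.aemeasurable.div (by fun_prop : Continuous fun z => |z - z₀| ^ n).aemeasurable
      ).aestronglyMeasurable.restrict ?_
  filter_upwards [ae_restrict_mem (measurableSet_lt_abs_sub z₀ r)] with z hz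
  simp only [norm_div, norm_pow, Real.norm_eq_abs, abs_abs]
  gcongr

theorem integrableOn_norm_div_sq_add_norm_deriv_div {a : ℝ → ℂ} (ha : ContDiff ℝ 1 a)
    (hsupp : HasCompactSupport a) {z₀ r : ℝ} (hr : 0 < r) :
    IntegrableOn (fun z => ‖a z‖ / |z - z₀| ^ 2 + ‖deriv a z‖ / |z - z₀|) {z | r < |z - z₀|} := by
  have h₁ := integrableOn_div_abs_sub_pow (z₀ := z₀)
    (ha.continuous.norm.integrable_of_hasCompactSupport hsupp.norm) hr 2
  have h₂ := integrableOn_div_abs_sub_pow (z₀ := z₀)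
    ((ha.continuous_deriv le_rfl).norm.integrable_of_hasCompactSupport hsupp.deriv.norm) hr 1
  simp only [pow_one] at h₂
  exact h₁.add h₂

theorem integral_mul_one_sub_annularCutoff_le {f : ℝ → ℝ} (hf : Integrable f) (hf0 : 0 ≤ f)
    {z₀ r : ℝ} (hr : 0 < r) :
    ∫ z, f z * (1 - annularCutoff z₀ r z) ≤
      (∫ z in {z | |z - z₀| < r}, f z) +
        4 * r ^ 2 * ∫ z in {z | r < |z - z₀|}, f z / |z - z₀| ^ 2 := by
  set S₁ := {z : ℝ | |z - z₀| < r}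
  set S₂ := {z : ℝ | r < |z - z₀|}
  have hS₁ : MeasurableSet S₁ := measurableSet_abs_sub_lt z₀ r
  have hS₂ : MeasurableSet S₂ := measurableSet_lt_abs_sub z₀ r
  have h₁ : Integrable (S₁.indicator f) := (integrable_indicator_iff hS₁).2 hf.integrableOn
  have h₂ : Integrable (S₂.indicator fun z => 4 * r ^ 2 * (f z / |z - z₀| ^ 2)) :=
    (integrable_indicator_iff hS₂).2 ((integrableOn_div_abs_sub_pow hf hr 2).const_mul _)
  rw [← integral_const_mul, ← integral_indicator hS₁, ← integral_indicator hS₂,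
    ← integral_add h₁ h₂]
  refine integral_mono_of_nonneg (Eventually.of_forall fun z =>
    mul_nonneg (hf0 z) (sub_nonneg.2 (annularCutoff.le_one _ _ _))) (h₁.add h₂) ?_
  filter_upwards [ae_abs_sub_ne z₀ r] with z hz
  rcases hz.lt_or_gt with h | h
  · rw [indicator_of_mem (show z ∈ S₁ from h), indicator_of_notMem (show z ∉ S₂ from h.le.not_gt),
      annularCutoff.eq_zero h.le, sub_zero, mul_one, add_zero]
  rw [indicator_of_notMem (show z ∉ S₁ from h.le.not_gt), indicator_of_mem (show z ∈ S₂ from h),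
    zero_add]
  have hfz : 0 ≤ f z := hf0 z
  rcases le_or_gt (2 * r) |z - z₀| with h₂r | h₂r
  · rw [annularCutoff.eq_one hr h₂r, sub_self, mul_zero]
    positivity
  · calc f z * (1 - annularCutoff z₀ r z) ≤ f z :=
          mul_le_of_le_one_right hfz (by linarith [annularCutoff.nonneg z₀ r z])
      _ ≤ 4 * r ^ 2 * (f z / |z - z₀| ^ 2) := by
          have hsq : |z - z₀| ^ 2 ≤ (2 * r) ^ 2 := pow_le_pow_left₀ (abs_nonneg _) h₂r.le 2
          rw [mul_div_assoc', le_div_iff₀ (pow_pos (hr.trans h) 2)]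
          nlinarith [mul_le_mul_of_nonneg_left hsq hfz]

theorem norm_integral_exp_mul_one_sub_annularCutoff_le {φ : ℝ → ℝ} {a : ℝ → ℂ} {t z₀ r : ℝ}
    (ha : ContDiff ℝ 1 a) (hsupp : HasCompactSupport a) (hr : 0 < r) :
    ‖∫ z, Complex.exp (-Complex.I * t * φ z) * (a z * ((1 - annularCutoff z₀ r z : ℝ) : ℂ))‖ ≤
      (∫ z in {z | |z - z₀| < r}, ‖a z‖) + 4 * (r ^ 2 * ∫ z in {z | r < |z - z₀|},
        (‖a z‖ / |z - z₀| ^ 2 + ‖deriv a z‖ / |z - z₀|)) := by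
  have ha_int : Integrable fun z => ‖a z‖ :=
    ha.continuous.norm.integrable_of_hasCompactSupport hsupp.norm
  calc _ ≤ ∫ z, ‖a z‖ * (1 - annularCutoff z₀ r z) := by
        refine (norm_integral_le_integral_norm _).trans_eq ?_
        congr with z
        rw [norm_mul, norm_exp_neg_I_mul, one_mul, norm_mul, Complex.norm_real, Real.norm_eq_abs,
          abs_of_nonneg (sub_nonneg.2 (annularCutoff.le_one _ _ _))]
    _ ≤ (∫ z in {z | |z - z₀| < r}, ‖a z‖) +
          4 * r ^ 2 * ∫ z in {z | r < |z - z₀|}, ‖a z‖ / |z - z₀| ^ 2 :=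
        integral_mul_one_sub_annularCutoff_le ha_int (fun z => norm_nonneg (a z)) hr
    _ ≤ _ := by
        rw [mul_assoc]
        gcongr _ + 4 * (_ * ?_)
        exact setIntegral_mono_on (integrableOn_div_abs_sub_pow ha_int hr 2)
          (integrableOn_norm_div_sq_add_norm_deriv_div ha hsupp hr) (measurableSet_lt_abs_sub z₀ r)
          fun z _ => le_add_of_nonneg_right (by positivity)

section FarFromStationaryPoint

variable {φ : ℝ → ℝ} {a : ℝ → ℂ} {z₀ t r C M : ℝ}

theorem norm_deriv_mul_annularCutoff_div_le (hr : 0 < r) (ha : Differentiable ℝ a)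
    (hφ' : Differentiable ℝ (deriv φ)) (hlb : ∀ z, |z - z₀| ≤ |deriv φ z|)
    (hC : ∀ z, |deriv (deriv φ) z| ≤ C)
    (hM : ∀ z, |deriv (annularCutoff z₀ r) z| * |z - z₀| ≤ M)
    (hb0 : ∀ z, deriv φ z = 0 → (fun w => a w * (annularCutoff z₀ r w : ℂ)) =ᶠ[𝓝 z] 0) (z : ℝ) :
    ‖deriv (fun w => a w * (annularCutoff z₀ r w : ℂ) / deriv φ w) z‖ ≤
      {z | r < |z - z₀|}.indicator
        (fun z => (M + C + 1) * (‖a z‖ / |z - z₀| ^ 2 + ‖deriv a z‖ / |z - z₀|)) z := by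
  set ψ := annularCutoff z₀ r
  have hψ : Differentiable ℝ ψ := annularCutoff.contDiff.differentiable one_ne_zero
  have hb' : deriv (fun w => a w * (ψ w : ℂ)) z = deriv a z * ψ z + a z * deriv ψ z :=
    ((ha z).hasDerivAt.mul (hψ z).hasDerivAt.ofReal_comp).deriv
  have hb : Differentiable ℝ fun w => a w * (ψ w : ℂ) := fun w =>
    ((ha w).hasDerivAt.mul (hψ w).hasDerivAt.ofReal_comp).differentiableAt
  refine (norm_deriv_div_ofReal_le hb hφ' hb0 z).trans ?_
  rw [hb']
  rcases le_or_gt |z - z₀| r with h | h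
  · rw [indicator_of_notMem (show z ∉ {z | r < |z - z₀|} from h.not_gt),
      show ψ z = 0 from annularCutoff.eq_zero h,
      show deriv ψ z = 0 from annularCutoff.deriv_eq_zero h]
    simp
  rw [indicator_of_mem (show z ∈ {z | r < |z - z₀|} from h)]
  set d := |z - z₀|
  have hd : 0 < d := hr.trans h
  have hM0 : 0 ≤ M := (by positivity : 0 ≤ |deriv ψ z| * d).trans (hM z)
  have hC0 : 0 ≤ C := (abs_nonneg _).trans (hC z)
  have hψ1 : |ψ z| ≤ 1 := by
    rw [abs_of_nonneg (annularCutoff.nonneg _ _ _)]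
    exact annularCutoff.le_one _ _ _
  have hnorm_b' : ‖deriv a z * ψ z + a z * deriv ψ z‖ ≤ ‖deriv a z‖ + ‖a z‖ * (M / d) := by
    refine (norm_add_le _ _).trans ?_
    simp only [norm_mul, Complex.norm_real, Real.norm_eq_abs]
    gcongr
    · exact mul_le_of_le_one_right (norm_nonneg _) hψ1
    · exact (le_div_iff₀ hd).2 (hM z)
  have hnorm_b : ‖a z * ψ z‖ ≤ ‖a z‖ := by
    simpa [norm_mul] using mul_le_of_le_one_right (norm_nonneg (a z)) hψ1
  have hsq : d ^ 2 ≤ deriv φ z ^ 2 := by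
    rw [← sq_abs (deriv φ z)]
    exact pow_le_pow_left₀ hd.le (hlb z) 2
  calc ‖deriv a z * ψ z + a z * deriv ψ z‖ / |deriv φ z| +
        ‖a z * ψ z‖ * |deriv (deriv φ) z| / deriv φ z ^ 2
      ≤ (‖deriv a z‖ + ‖a z‖ * (M / d)) / d + ‖a z‖ * C / d ^ 2 := by
        gcongr
        · exact hlb z
        · exact hC z
    _ = ‖deriv a z‖ / d + (M + C) * (‖a z‖ / d ^ 2) := by
        field_simp
        ring
    _ ≤ (M + C + 1) * (‖a z‖ / d ^ 2 + ‖deriv a z‖ / d) := by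
        have : 0 ≤ ‖a z‖ / d ^ 2 := by positivity
        have : 0 ≤ ‖deriv a z‖ / d := by positivity
        nlinarith

theorem norm_integral_exp_mul_annularCutoff_le (ht : 0 < t) (hr : 0 < r) (hφ : ContDiff ℝ 2 φ)
    (hφ0 : deriv φ z₀ = 0) (hφ'' : ∀ z, 1 ≤ deriv (deriv φ) z ∧ deriv (deriv φ) z ≤ C)
    (ha : ContDiff ℝ 1 a) (hsupp : HasCompactSupport a)
    (hM : ∀ z, |deriv (annularCutoff z₀ r) z| * |z - z₀| ≤ M) :
    ‖∫ z, Complex.exp (-Complex.I * t * φ z) * (a z * annularCutoff z₀ r z)‖ ≤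
      (M + C + 1) * (t⁻¹ * ∫ z in {z | r < |z - z₀|},
        (‖a z‖ / |z - z₀| ^ 2 + ‖deriv a z‖ / |z - z₀|)) := by
  have hφ' : ContDiff ℝ 1 (deriv φ) := hφ.deriv'
  have hlb : ∀ z, |z - z₀| ≤ |deriv φ z| := fun z => by
    simpa [hφ0] using abs_sub_le_abs_sub_of_one_le_deriv (hφ'.differentiable one_ne_zero)
      (fun z => (hφ'' z).1) z z₀
  have hC : ∀ z, |deriv (deriv φ) z| ≤ C := fun z => by
    rw [abs_of_pos (zero_lt_one.trans_le (hφ'' z).1)]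
    exact (hφ'' z).2
  -- `φ'` vanishes only at `z₀`, where the cutoff kills the amplitude
  have hb0 : ∀ z, deriv φ z = 0 → (fun w => a w * (annularCutoff z₀ r w : ℂ)) =ᶠ[𝓝 z] 0 := by
    intro z hz
    obtain rfl : z = z₀ := by simpa [hz, sub_eq_zero] using hlb z
    exact (annularCutoff.eventuallyEq_zero hr).mono fun w hw => by simp [hw]
  calc _ ≤ t⁻¹ * ∫ z, ‖deriv (fun w => a w * (annularCutoff z₀ r w : ℂ) / deriv φ w) z‖ := by
        simpa [abs_of_pos ht] using norm_integral_exp_mul_le hφ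
          (ha.mul (Complex.ofRealCLM.contDiff.comp annularCutoff.contDiff)) hsupp.mul_right hb0
          ht.ne'
    _ ≤ t⁻¹ * ∫ z, {z | r < |z - z₀|}.indicator
          (fun z => (M + C + 1) * (‖a z‖ / |z - z₀| ^ 2 + ‖deriv a z‖ / |z - z₀|)) z := by
        refine mul_le_mul_of_nonneg_left ?_ (by positivity)
        exact integral_mono_of_nonneg (Eventually.of_forall fun _ => norm_nonneg _)
          ((integrable_indicator_iff (measurableSet_lt_abs_sub z₀ r)).2
            ((integrableOn_norm_div_sq_add_norm_deriv_div ha hsupp hr).const_mul _))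
          (Eventually.of_forall (norm_deriv_mul_annularCutoff_div_le hr
            (ha.differentiable one_ne_zero) (hφ'.differentiable one_ne_zero) hlb hC hM hb0))
    _ = _ := by
        rw [integral_indicator (measurableSet_lt_abs_sub z₀ r), integral_const_mul]
        ring

end FarFromStationaryPoint

/-- Lemma 5.4 (Schlag's stationary phase estimate).  The implicit constant
depends only on the upper bound `C'` for `φ''`. -/
theorem stationary_phase_estimate (C' : ℝ) (hC' : 1 ≤ C') :
    ∃ K > 0, ∀ (φ : ℝ → ℝ) (a : ℝ → ℂ) (z₀ t : ℝ), 0 < t →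
      ContDiff ℝ 2 φ →
      deriv φ z₀ = 0 →
      (∀ z, 1 ≤ deriv (deriv φ) z ∧ deriv (deriv φ) z ≤ C') →
      ContDiff ℝ 1 a →
      HasCompactSupport a →
      ‖∫ z : ℝ, Complex.exp (-Complex.I * t * (φ z : ℂ)) * a z‖
        ≤ K * ((∫ z in {z : ℝ | |z - z₀| < t ^ (-(1 / 2 : ℝ))}, ‖a z‖)
            + t⁻¹ * ∫ z in {z : ℝ | t ^ (-(1 / 2 : ℝ)) < |z - z₀|},
                (‖a z‖ / |z - z₀| ^ 2 + ‖deriv a z‖ / |z - z₀|)) := by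
  obtain ⟨M, hM0, hM⟩ := annularCutoff.exists_abs_deriv_mul_le
  refine ⟨M + C' + 5, by linarith, fun φ a z₀ t ht hφ hφ0 hφ'' ha hsupp => ?_⟩
  set r := t ^ (-(1 / 2 : ℝ))
  have hr : 0 < r := rpow_pos_of_pos ht _
  have hr2 : r ^ 2 = t⁻¹ := by
    rw [← rpow_natCast, ← rpow_mul ht.le]
    norm_num [rpow_neg_one]
  have hnear :=
    norm_integral_exp_mul_one_sub_annularCutoff_le (φ := φ) (t := t) (z₀ := z₀) ha hsupp hr
  have hfar := norm_integral_exp_mul_annularCutoff_le ht hr hφ hφ0 hφ'' ha hsupp (hM z₀ r · hr)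
  rw [hr2] at hnear
  set X := ∫ z in {z : ℝ | |z - z₀| < r}, ‖a z‖
  set Y := t⁻¹ * ∫ z in {z : ℝ | r < |z - z₀|}, (‖a z‖ / |z - z₀| ^ 2 + ‖deriv a z‖ / |z - z₀|)
  have hX : 0 ≤ X := setIntegral_nonneg (measurableSet_abs_sub_lt z₀ r) fun z _ => norm_nonneg _
  have hY : 0 ≤ Y := mul_nonneg (inv_nonneg.2 ht.le)
    (setIntegral_nonneg (measurableSet_lt_abs_sub z₀ r) fun z _ => by positivity)
  calc _ ≤ (X + 4 * Y) + (M + C' + 1) * Y := by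
        rw [integral_mul_eq_mul_one_sub_add_mul (by fun_prop) ha.continuous hsupp
          (annularCutoff.contDiff (n := 0)).continuous]
        exact (norm_add_le _ _).trans (add_le_add hnear hfar)
    _ ≤ (M + C' + 5) * (X + Y) := by nlinarith
end

section
/- Let m > 0 and let h : [z₀, ∞) → ℂ be C² and compactly supported (via cutoffs) with |∂_z^k h(z)| ≲ z^{1/2+ε} for k = 0, 1, 2 and some ε > 0, uniformly on its support, where z₀ > 0. Then for t ≥ 1, | ∫_0^∞ e^{-it√(z²+m²)} (z^{-2-ε'} h(z)/√(z²+m²)) dz | ≲ t^{-2} for any ε' > ε, where the implicit constant is independent of t. -/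
/-!
Write the amplitude as `φ'(z) u(z)` with `φ(z) = √(z² + m²)`, `φ'(z) = z / φ(z)` and
`u(z) = z^{-3-ε'} h(z)`, which is `C²` with compact support in `[z₀, ∞)`. Since
`φ' e^{-itφ} = (i/t) ∂_z e^{-itφ}`, one integration by parts (no boundary terms) trades a
factor `φ'` for a factor `t⁻¹` and a derivative on the amplitude. Doing it twice, with
`u' = φ' · (u'/φ')` in the second step (legitimate because `φ' ≠ 0` on the support of `u`),
bounds the integral by `t⁻² ∫ |(u'/φ')'|`.
-/

set_option autoImplicit false

open MeasureTheory Real Set Filter Topology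

section ContDiff

variable {𝕜 E F : Type*} [NontriviallyNormedField 𝕜] [NormedAddCommGroup E]
  [NormedSpace 𝕜 E] [NormedAddCommGroup F] [NormedSpace 𝕜 F] {n : WithTop ℕ∞}

theorem ContDiffOn.contDiff_smul_of_tsupport_subset {f : E → 𝕜} {g : E → F}
    {U : Set E} (hU : IsOpen U) (hf : ContDiffOn 𝕜 n f U) (hg : ContDiff 𝕜 n g)
    (hgU : tsupport g ⊆ U) :
    ContDiff 𝕜 n fun x => f x • g x := by
  refine contDiff_iff_contDiffAt.2 fun x => ?_
  by_cases hx : x ∈ U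
  · exact (hf.contDiffAt (hU.mem_nhds hx)).smul hg.contDiffAt
  · have hg0 : g =ᶠ[𝓝 x] 0 := notMem_tsupport_iff_eventuallyEq.1 fun h => hx (hgU h)
    refine (contDiffAt_const (c := (0 : F))).congr_of_eventuallyEq ?_
    filter_upwards [hg0] with y hy
    simp [hy]

end ContDiff

section Oscillatory

variable {φ : ℝ → ℝ}

theorem integral_cexp_phase_mul_deriv_smul (hφ : ContDiff ℝ 1 φ) {w : ℝ → ℂ}
    (hw : ContDiff ℝ 1 w) (hwc : HasCompactSupport w) (t : ℝ) :
    Complex.I * t * ∫ z, Complex.exp (-Complex.I * t * φ z) * (deriv φ z • w z)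
      = ∫ z, Complex.exp (-Complex.I * t * φ z) * deriv w z := by
  set e : ℝ → ℂ := fun z => Complex.exp (-Complex.I * t * φ z)
  have he : ∀ z, HasDerivAt e (e z * (-Complex.I * t * deriv φ z)) z := fun z =>
    (((hφ.differentiable one_ne_zero) z).hasDerivAt.ofReal_comp.const_mul _).cexp
  have hec : Continuous e := by fun_prop
  have hw' : Continuous (deriv w) := hw.continuous_deriv le_rfl
  have hφ' : Continuous (deriv φ) := hφ.continuous_deriv le_rfl
  have ibp := integral_mul_deriv_eq_deriv_mul_of_integrable (u := e) (v := w)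
    (fun z _ => he z) (fun z _ => ((hw.differentiable one_ne_zero) z).hasDerivAt)
    ((hec.mul hw').integrable_of_hasCompactSupport hwc.deriv.mul_left)
    ((by fun_prop : Continuous fun z => e z * (-Complex.I * t * deriv φ z) * w z)
      |>.integrable_of_hasCompactSupport hwc.mul_left)
    ((hec.mul hw.continuous).integrable_of_hasCompactSupport hwc.mul_left)
  rw [ibp, ← integral_const_mul, ← integral_neg]
  congr 1 with z
  rw [Complex.real_smul]
  ring

theorem exists_norm_integral_cexp_phase_mul_deriv_smul_le (hφ : ContDiff ℝ 2 φ)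
    {u : ℝ → ℂ} (hu : ContDiff ℝ 2 u) (huc : HasCompactSupport u)
    (hφu : ∀ z ∈ tsupport u, deriv φ z ≠ 0) :
    ∃ C > 0, ∀ t : ℝ, t ≠ 0 →
      ‖∫ z, Complex.exp (-Complex.I * t * φ z) * (deriv φ z • u z)‖
        ≤ C * t ^ (-2 : ℤ) := by
  have hφ' : ContDiff ℝ 1 (deriv φ) := hφ.deriv'
  have hu' : ContDiff ℝ 1 (deriv u) := hu.deriv'
  set v : ℝ → ℂ := fun z => (deriv φ z)⁻¹ • deriv u z
  have hv : ContDiff ℝ 1 v :=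
    ContDiffOn.contDiff_smul_of_tsupport_subset (U := {z | deriv φ z ≠ 0})
      (isOpen_ne_fun hφ'.continuous continuous_const) (hφ'.contDiffOn.inv fun _ hz => hz) hu'
      (tsupport_deriv_subset.trans hφu)
  have hdu : deriv u = fun z => deriv φ z • v z := by
    ext z
    by_cases hz : deriv φ z = 0
    · have : z ∉ Function.support (deriv u) := fun h => hφu z (support_deriv_subset h) hz
      simpa [v, hz] using this
    · simp [v, hz]
  refine ⟨(∫ z, ‖deriv v z‖) + 1, by positivity, fun t ht => ?_⟩
  have hvc : HasCompactSupport v := huc.deriv.smul_left (f := fun z => (deriv φ z)⁻¹)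
  have twice :
      (Complex.I * t) ^ 2 * ∫ z, Complex.exp (-Complex.I * t * φ z) * (deriv φ z • u z)
        = ∫ z, Complex.exp (-Complex.I * t * φ z) * deriv v z := by
    rw [sq, mul_assoc, integral_cexp_phase_mul_deriv_smul hφ.of_succ hu.of_succ huc, hdu,
      integral_cexp_phase_mul_deriv_smul hφ.of_succ hv hvc]
  have hbound : t ^ 2 * ‖∫ z, Complex.exp (-Complex.I * t * φ z) * (deriv φ z • u z)‖
      ≤ ∫ z, ‖deriv v z‖ := by
    calc t ^ 2 * ‖∫ z, Complex.exp (-Complex.I * t * φ z) * (deriv φ z • u z)‖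
        = ‖∫ z, Complex.exp (-Complex.I * t * φ z) * deriv v z‖ := by
          rw [← twice, norm_mul, norm_pow, norm_mul, Complex.norm_I, Complex.norm_real,
            one_mul, Real.norm_eq_abs, sq_abs]
      _ ≤ ∫ z, ‖Complex.exp (-Complex.I * t * φ z) * deriv v z‖ :=
          norm_integral_le_integral_norm _
      _ = ∫ z, ‖deriv v z‖ := by
          congr 1 with z
          rw [norm_mul, Complex.norm_exp]
          simp
  rw [zpow_neg, zpow_two, ← sq, ← div_eq_mul_inv, le_div_iff₀ (by positivity), mul_comm]
  linarith

end Oscillatory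

theorem tsupport_subset_Ici_of_forall_lt_eq_zero {M : Type*} [Zero M] {f : ℝ → M} {a : ℝ}
    (hf : ∀ z < a, f z = 0) : tsupport f ⊆ Ici a :=
  closure_minimal (fun z hz => not_lt.1 fun hlt => hz (hf z hlt)) isClosed_Ici

theorem hasDerivAt_sqrt_sq_add_sq {m : ℝ} (hm : m ≠ 0) (z : ℝ) :
    HasDerivAt (fun z => √(z ^ 2 + m ^ 2)) (z / √(z ^ 2 + m ^ 2)) z := by
  have hpos : 0 < z ^ 2 + m ^ 2 := by positivity
  convert ((hasDerivAt_pow 2 z).add_const (m ^ 2)).sqrt hpos.ne' using 1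
  field_simp
  ring

theorem high_energy_ibp_general (m z₀ ε' : ℝ) (hm : 0 < m) (hz₀ : 0 < z₀)
    (h : ℝ → ℂ) (hh : ContDiff ℝ 2 h) (hhc : HasCompactSupport h)
    (hsupp : ∀ z, z < z₀ → h z = 0) :
    ∃ C > 0, ∀ t : ℝ, 1 ≤ t →
      ‖∫ z in Ioi (0 : ℝ),
          Complex.exp (-Complex.I * t * ((Real.sqrt (z ^ 2 + m ^ 2) : ℝ) : ℂ))
            * ((z ^ (-(2 + ε')) / Real.sqrt (z ^ 2 + m ^ 2) : ℝ) : ℂ) * h z‖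
        ≤ C * t ^ (-2 : ℤ) := by
  set φ : ℝ → ℝ := fun z => √(z ^ 2 + m ^ 2)
  have hφ' : ∀ z, deriv φ z = z / φ z := fun z => (hasDerivAt_sqrt_sq_add_sq hm.ne' z).deriv
  have hsupp_h : tsupport h ⊆ Ioi 0 :=
    (tsupport_subset_Ici_of_forall_lt_eq_zero hsupp).trans (Ici_subset_Ioi.2 hz₀)
  obtain ⟨C, hC, hdecay⟩ := exists_norm_integral_cexp_phase_mul_deriv_smul_le (φ := φ)
    ((contDiff_id.pow 2).add contDiff_const |>.sqrt fun z => by positivity)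
    (ContDiffOn.contDiff_smul_of_tsupport_subset isOpen_Ioi
      (fun z hz => (Real.contDiffAt_rpow_const_of_ne (ne_of_gt hz)).contDiffWithinAt) hh hsupp_h)
    hhc.smul_left
    fun z hz => by
      have hzpos : 0 < z := hsupp_h (tsupport_smul_subset_right _ _ hz)
      rw [hφ']
      positivity
  refine ⟨C, hC, fun t ht => ?_⟩
  convert hdecay t (by positivity) using 2
  have hIoi : ∀ z ∉ Ioi (0 : ℝ), h z = 0 := fun z hz => hsupp z ((not_lt.1 hz).trans_lt hz₀)
  rw [setIntegral_eq_integral_of_forall_compl_eq_zero fun z hz => by simp [hIoi z hz]]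
  congr 1 with z
  by_cases hz : 0 < z
  · have hrpow : z ^ (-(2 + ε')) = z * z ^ (-(3 + ε')) := by
      rw [show -(2 + ε') = 1 + -(3 + ε') by ring, Real.rpow_add hz, Real.rpow_one]
    simp only [hφ', φ, Complex.real_smul, hrpow]
    push_cast
    ring
  · simp [hIoi z hz]

/-- High-energy integration by parts (abstracting Lemma 4.7): a twice-differentiable
compactly supported amplitude, supported away from zero and growing at most like
`z^{1/2+ε}`, multiplied by `z^{-2-ε'}` produces `t⁻²` decay. -/
theorem high_energy_ibp (m z₀ ε ε' : ℝ) (hm : 0 < m) (hz₀ : 0 < z₀)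
    (hε : 0 < ε) (hε' : ε < ε')
    (h : ℝ → ℂ) (hh : ContDiff ℝ 2 h) (hhc : HasCompactSupport h)
    (hsupp : ∀ z, z < z₀ → h z = 0)
    (c : ℝ)
    (hbound : ∀ k ≤ 2, ∀ z, z₀ ≤ z → ‖iteratedDeriv k h z‖ ≤ c * z ^ (1 / 2 + ε)) :
    ∃ C > 0, ∀ t : ℝ, 1 ≤ t →
      ‖∫ z in Ioi (0 : ℝ),
          Complex.exp (-Complex.I * t * ((Real.sqrt (z ^ 2 + m ^ 2) : ℝ) : ℂ))
            * ((z ^ (-(2 + ε')) / Real.sqrt (z ^ 2 + m ^ 2) : ℝ) : ℂ) * h z‖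
        ≤ C * t ^ (-2 : ℤ) :=
  high_energy_ibp_general m z₀ ε' hm hz₀ h hh hhc hsupp
end
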